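/- arXiv:0707.3895 — 14 statements merged into one kernel-verified Lean document; each statement's English description precedes it below -/
import Mathlib

section
/- Let G be a group, x ∈ G, and G' the commutator subgroup of G. Define Q̃ = {(a,g) ∈ G × G' : a = g⁻¹xg}. Then Q̃ is closed under the operations (a,g) ◃ (b,h) := (b⁻¹ab, g·a⁻¹·b) and (a,g) ◃⁻¹ (b,h) := (b·a·b⁻¹, g·a·b⁻¹) (i.e. these formulas again yield elements of Q̃), and these operations make Q̃ a quandle: z ◃ z = z for all z ∈ Q̃; (z ◃ w) ◃⁻¹ w = z = (z ◃⁻¹ w) ◃ w for all z, w ∈ Q̃; and (z ◃ w) ◃ u = (z ◃ u) ◃ (w ◃ u) for all z, w, u ∈ Q̃. -/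
/-!
Every `g⁻¹ x g` has the same image as `x` in the abelianization, so two such conjugates differ
by an element of `G'`; this makes the second components of `◃` and `◃⁻¹` land in `G'`. Moreover
`g · a⁻¹ · b` conjugates `x` to `b⁻¹ a b` whenever `a = g⁻¹ x g`, which gives closure. The
quandle axioms are identities in the free group and hold for all pairs, not only on `Q̃`.
-/

namespace Abelianization

variable {G : Type*} [Group G]

theorem mem_commutator_iff_of_eq_one {g : G} : g ∈ commutator G ↔ of g = 1 := by
  rw [← ker_of, MonoidHom.mem_ker]

theorem of_conj (x g : G) : of (g⁻¹ * x * g) = of x := by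
  rw [map_mul, map_mul, mul_right_comm, map_inv, inv_mul_cancel, one_mul]

theorem inv_mul_conj_mem_commutator (x g h : G) :
    (g⁻¹ * x * g)⁻¹ * (h⁻¹ * x * h) ∈ commutator G := by
  rw [mem_commutator_iff_of_eq_one, map_mul, map_inv, of_conj, of_conj, inv_mul_cancel]

theorem conj_mul_inv_mem_commutator (x g h : G) :
    (g⁻¹ * x * g) * (h⁻¹ * x * h)⁻¹ ∈ commutator G := by
  rw [mem_commutator_iff_of_eq_one, map_mul, map_inv, of_conj, of_conj, mul_inv_cancel]

end Abelianization

section CoveringQuandle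

variable {G : Type*} [Group G] {x a b g : G}

theorem covering_op_closed (hg : g ∈ commutator G) (ha : a = g⁻¹ * x * g) (h : G)
    (hb : b = h⁻¹ * x * h) :
    g * a⁻¹ * b ∈ commutator G ∧ b⁻¹ * a * b = (g * a⁻¹ * b)⁻¹ * x * (g * a⁻¹ * b) := by
  refine ⟨?_, ?_⟩
  · rw [mul_assoc, ha, hb]
    exact mul_mem hg (Abelianization.inv_mul_conj_mem_commutator x g h)
  · subst ha
    group

theorem covering_opInv_closed (hg : g ∈ commutator G) (ha : a = g⁻¹ * x * g) (h : G)
    (hb : b = h⁻¹ * x * h) :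
    g * a * b⁻¹ ∈ commutator G ∧ b * a * b⁻¹ = (g * a * b⁻¹)⁻¹ * x * (g * a * b⁻¹) := by
  refine ⟨?_, ?_⟩
  · rw [mul_assoc, ha, hb]
    exact mul_mem hg (Abelianization.conj_mul_inv_mem_commutator x g h)
  · subst ha
    group

end CoveringQuandle

/-- The covering quandle `Q̃ = {(a,g) ∈ G × G' : a = g⁻¹xg}` is closed under
the operations `(a,g) ◃ (b,h) = (b⁻¹ab, g·a⁻¹·b)` and `(a,g) ◃⁻¹ (b,h) = (bab⁻¹, g·a·b⁻¹)`,
and these operations satisfy the quandle axioms (Q1), (Q2), (Q3) on `Q̃`. -/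
theorem stmt_0 {G : Type*} [Group G] (x : G)
    (Qt : Set (G × G))
    (hQt : Qt = {z : G × G | z.2 ∈ commutator G ∧ z.1 = z.2⁻¹ * x * z.2})
    (op opInv : G × G → G × G → G × G)
    (hop : ∀ z w : G × G, op z w = (w.1⁻¹ * z.1 * w.1, z.2 * z.1⁻¹ * w.1))
    (hopInv : ∀ z w : G × G, opInv z w = (w.1 * z.1 * w.1⁻¹, z.2 * z.1 * w.1⁻¹)) :
    (∀ z ∈ Qt, ∀ w ∈ Qt, op z w ∈ Qt ∧ opInv z w ∈ Qt) ∧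
    (∀ z ∈ Qt, op z z = z) ∧
    (∀ z ∈ Qt, ∀ w ∈ Qt, opInv (op z w) w = z ∧ op (opInv z w) w = z) ∧
    (∀ z ∈ Qt, ∀ w ∈ Qt, ∀ u ∈ Qt, op (op z w) u = op (op z u) (op w u)) := by
  subst hQt
  refine ⟨?_, ?_, ?_, ?_⟩
  · rintro ⟨a, g⟩ ⟨hg, ha⟩ ⟨b, h⟩ ⟨-, hb⟩
    rw [hop, hopInv]
    exact ⟨covering_op_closed hg ha h hb, covering_opInv_closed hg ha h hb⟩
  · rintro ⟨a, g⟩ -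
    simp only [hop, Prod.mk.injEq]
    constructor <;> group
  · rintro ⟨a, g⟩ - ⟨b, h⟩ -
    simp only [hop, hopInv, Prod.mk.injEq]
    refine ⟨⟨?_, ?_⟩, ?_, ?_⟩ <;> group
  · rintro ⟨a, g⟩ - ⟨b, h⟩ - ⟨c, k⟩ -
    simp only [hop, Prod.mk.injEq]
    constructor <;> group
end

section
/- Let G be a group, x ∈ G, G' its commutator subgroup, and Q̃(G,x) the covering quandle. Then the map ((a,g), b) ↦ (b⁻¹ab, gb), for b ∈ G', is a well-defined right action of G' on Q̃(G,x); every b ∈ G' acts as a quandle automorphism, i.e. (z ◃ w)·b = (z·b) ◃ (w·b) for all z, w ∈ Q̃(G,x); and this action is transitive: for all z, z' ∈ Q̃(G,x) there exists b ∈ G' with z·b = z'. -/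
/-- The map `((a,g), b) ↦ (b⁻¹ab, gb)`, for `b ∈ G'`, is a well-defined right
action of the commutator subgroup `G'` on the covering quandle `Q̃(G,x)`; every `b ∈ G'` acts
as a quandle automorphism, and the action is transitive. -/
theorem stmt_1 {G : Type*} [Group G] (x : G)
    (Qt : Set (G × G))
    (hQt : Qt = {z : G × G | z.2 ∈ commutator G ∧ z.1 = z.2⁻¹ * x * z.2})
    (op : G × G → G × G → G × G)
    (hop : ∀ z w : G × G, op z w = (w.1⁻¹ * z.1 * w.1, z.2 * z.1⁻¹ * w.1))
    (act : G × G → G → G × G)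
    (hact : ∀ (z : G × G) (b : G), act z b = (b⁻¹ * z.1 * b, z.2 * b)) :
    (∀ z ∈ Qt, ∀ b ∈ commutator G, act z b ∈ Qt) ∧
    (∀ z ∈ Qt, act z 1 = z) ∧
    (∀ z ∈ Qt, ∀ b ∈ commutator G, ∀ b' ∈ commutator G, act z (b * b') = act (act z b) b') ∧
    (∀ z ∈ Qt, ∀ w ∈ Qt, ∀ b ∈ commutator G, act (op z w) b = op (act z b) (act w b)) ∧
    (∀ z ∈ Qt, ∀ z' ∈ Qt, ∃ b ∈ commutator G, act z b = z') := by
  subst hQt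
  refine ⟨?_, ?_, ?_, ?_, ?_⟩
  · rintro ⟨a, g⟩ ⟨hg, ha⟩ b hb
    rw [hact]
    refine ⟨mul_mem hg hb, ?_⟩
    simp only at ha ⊢
    rw [ha]; group
  · rintro z hz
    rw [hact]
    simp
  · intro z hz b hb b' hb'
    rw [hact, hact, hact]
    simp only
    simp only [Prod.mk.injEq]; constructor <;> group
  · rintro ⟨a, g⟩ ⟨hg, ha⟩ ⟨c, h⟩ ⟨hh, hc⟩ b hb
    rw [hop, hact, hact, hact, hop]
    simp only
    simp only [Prod.mk.injEq]; constructor <;> group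
  · rintro ⟨a, g⟩ ⟨hg, ha⟩ ⟨a', g'⟩ ⟨hg', ha'⟩
    refine ⟨g⁻¹ * g', mul_mem (inv_mem hg) hg', ?_⟩
    rw [hact]
    simp only at ha ha' ⊢
    rw [ha, ha']
    simp only [Prod.mk.injEq]; constructor <;> group
end

section
/- Let G be a group and x ∈ G such that G is generated by the conjugacy class x^G, let G' be the commutator subgroup, and let Q̃(G,x) be the covering quandle. Then the projection p : Q̃(G,x) → x^G, (a,g) ↦ a, is surjective; it is a quandle homomorphism, i.e. p(z ◃ w) = p(w)⁻¹ p(z) p(w) and p(z ◃⁻¹ w) = p(w) p(z) p(w)⁻¹; and it is a covering: whenever p(w) = p(w'), one has z ◃ w = z ◃ w' and z ◃⁻¹ w = z ◃⁻¹ w' for all z ∈ Q̃(G,x). -/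
/-- If `G` is generated by the conjugacy class `C = x^G`, then the projection
`p : Q̃(G,x) → x^G, (a,g) ↦ a` is surjective, is a quandle homomorphism onto the conjugation
quandle (`p(z ◃ w) = p(w)⁻¹ p(z) p(w)` and `p(z ◃⁻¹ w) = p(w) p(z) p(w)⁻¹`), and is a
covering: `p(w) = p(w')` implies `z ◃ w = z ◃ w'` and `z ◃⁻¹ w = z ◃⁻¹ w'`. -/
theorem stmt_2 {G : Type*} [Group G] (x : G)
    (C : Set G) (hC : C = {a : G | ∃ g : G, a = g⁻¹ * x * g})
    (hgen : Subgroup.closure C = ⊤)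
    (Qt : Set (G × G))
    (hQt : Qt = {z : G × G | z.2 ∈ commutator G ∧ z.1 = z.2⁻¹ * x * z.2})
    (op opInv : G × G → G × G → G × G)
    (hop : ∀ z w : G × G, op z w = (w.1⁻¹ * z.1 * w.1, z.2 * z.1⁻¹ * w.1))
    (hopInv : ∀ z w : G × G, opInv z w = (w.1 * z.1 * w.1⁻¹, z.2 * z.1 * w.1⁻¹)) :
    (∀ z ∈ Qt, z.1 ∈ C) ∧
    (∀ a ∈ C, ∃ z ∈ Qt, z.1 = a) ∧
    (∀ z ∈ Qt, ∀ w ∈ Qt,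
      (op z w).1 = w.1⁻¹ * z.1 * w.1 ∧ (opInv z w).1 = w.1 * z.1 * w.1⁻¹) ∧
    (∀ z ∈ Qt, ∀ w ∈ Qt, ∀ w' ∈ Qt, w.1 = w'.1 →
      op z w = op z w' ∧ opInv z w = opInv z w') := by
  subst hC hQt
  refine ⟨?_, ?_, ?_, ?_⟩
  · rintro ⟨a, g⟩ ⟨hg, ha⟩
    exact ⟨g, ha⟩
  · rintro a ⟨g, rfl⟩
    -- Abelianization is generated by the image of x
    have hofC : Abelianization.of '' {a : G | ∃ g : G, a = g⁻¹ * x * g} = {Abelianization.of x} := by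
      apply Set.eq_singleton_iff_nonempty_unique_mem.mpr
      constructor
      · exact ⟨Abelianization.of x, ⟨x, ⟨1, by group⟩, rfl⟩⟩
      · rintro _ ⟨b, ⟨k, rfl⟩, rfl⟩
        simp only [map_mul, map_inv]
        rw [mul_comm, ← mul_assoc]
        simp
    have htop : Subgroup.closure ({Abelianization.of x} : Set (Abelianization G)) = ⊤ := by
      have hsurj : Function.Surjective (Abelianization.of (G := G)) :=
        fun b => Quotient.inductionOn' b fun a => ⟨a, rfl⟩
      have := congrArg (Subgroup.map (Abelianization.of (G := G))) hgen
      rwa [MonoidHom.map_closure, hofC,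
        Subgroup.map_top_of_surjective _ hsurj] at this
    have hmem : Abelianization.of g ∈
        Subgroup.closure ({Abelianization.of x} : Set (Abelianization G)) := by
      rw [htop]; trivial
    obtain ⟨m, hm⟩ := Subgroup.mem_closure_singleton.mp hmem
    set h : G := x ^ (-m) * g with hh
    have hker : h ∈ commutator G := by
      have : Abelianization.of h = 1 := by
        rw [hh, map_mul, map_zpow, zpow_neg, hm, inv_mul_cancel]
      exact (QuotientGroup.eq_one_iff h).mp this
    refine ⟨(g⁻¹ * x * g, h), ⟨hker, ?_⟩, rfl⟩
    show g⁻¹ * x * g = h⁻¹ * x * h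
    rw [hh]
    have hx : x ^ (-m) * x * (x ^ (-m))⁻¹ = x := by group
    calc g⁻¹ * x * g = g⁻¹ * (x ^ (-m) * x * (x ^ (-m))⁻¹) * g := by rw [hx]
      _ = (x ^ (-m) * g)⁻¹ * x * (x ^ (-m) * g) := by group
  · intro z _ w _
    constructor <;> simp [hop, hopInv]
  · intro z _ w _ w' _ hww
    constructor
    · rw [hop, hop, hww]
    · rw [hopInv, hopInv, hww]
end

section
/- Let G be a group, x ∈ G, G' its commutator subgroup, Q̃(G,x) the covering quandle with projection p(a,g) = a, and Λ = {λ ∈ G' : λx = xλ} (that is, Λ = C(x) ∩ G'). Then the map (λ, (a,g)) ↦ (a, λg) is a well-defined left action of Λ on Q̃(G,x) satisfying (λ•z) ◃ w = λ•(z ◃ w) and z ◃ (λ•w) = z ◃ w for all z, w ∈ Q̃(G,x) and λ ∈ Λ; moreover, for any two elements (a,g), (a,h) of Q̃(G,x) with the same first coordinate there is a unique λ ∈ Λ with (a,h) = λ•(a,g); in other words, Λ acts freely and transitively on each fiber of p. -/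
/-- The map `(λ, (a,g)) ↦ (a, λg)` is a well-defined left action of
`Λ = C(x) ∩ G'` on the covering quandle `Q̃(G,x)`, it satisfies `(λ•z) ◃ w = λ•(z ◃ w)`
and `z ◃ (λ•w) = z ◃ w`, and `Λ` acts freely and transitively on each fibre of the
projection `p(a,g) = a`. -/
theorem stmt_3 {G : Type*} [Group G] (x : G)
    (Qt : Set (G × G))
    (hQt : Qt = {z : G × G | z.2 ∈ commutator G ∧ z.1 = z.2⁻¹ * x * z.2})
    (op : G × G → G × G → G × G)
    (hop : ∀ z w : G × G, op z w = (w.1⁻¹ * z.1 * w.1, z.2 * z.1⁻¹ * w.1))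
    (Λ : Set G) (hΛ : Λ = {l : G | l ∈ commutator G ∧ l * x = x * l})
    (act : G → G × G → G × G)
    (hact : ∀ (l : G) (z : G × G), act l z = (z.1, l * z.2)) :
    (∀ l ∈ Λ, ∀ z ∈ Qt, act l z ∈ Qt) ∧
    (∀ z ∈ Qt, act 1 z = z) ∧
    (∀ l ∈ Λ, ∀ l' ∈ Λ, ∀ z ∈ Qt, act (l * l') z = act l (act l' z)) ∧
    (∀ l ∈ Λ, ∀ z ∈ Qt, ∀ w ∈ Qt,
      op (act l z) w = act l (op z w) ∧ op z (act l w) = op z w) ∧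
    (∀ z ∈ Qt, ∀ w ∈ Qt, z.1 = w.1 → ∃! l : G, l ∈ Λ ∧ act l z = w) := by
  subst hQt hΛ
  refine ⟨?_, ?_, ?_, ?_, ?_⟩
  · rintro l ⟨hl1, hl2⟩ z ⟨hz1, hz2⟩
    rw [hact]
    refine ⟨mul_mem hl1 hz1, ?_⟩
    have hx : l⁻¹ * x * l = x := by
      rw [mul_assoc, ← hl2]; group
    simp only
    rw [mul_inv_rev, hz2]
    rw [show z.2⁻¹ * l⁻¹ * x * (l * z.2) = z.2⁻¹ * (l⁻¹ * x * l) * z.2 by group, hx]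
  · intro z _; rw [hact]; simp
  · intro l _ l' _ z _; rw [hact, hact, hact]; simp [mul_assoc]
  · intro l hl z hz w hw
    constructor
    · rw [hop, hop, hact, hact]
      simp only
      congr 1
      group
    · rw [hop, hop, hact]
  · rintro z ⟨hz1, hz2⟩ w ⟨hw1, hw2⟩ h
    refine ⟨w.2 * z.2⁻¹, ⟨⟨mul_mem hw1 (inv_mem hz1), ?_⟩, ?_⟩, ?_⟩
    · have heq : z.2⁻¹ * x * z.2 = w.2⁻¹ * x * w.2 := by rw [← hz2, ← hw2, h]
      calc w.2 * z.2⁻¹ * x = w.2 * (z.2⁻¹ * x * z.2) * z.2⁻¹ := by group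
        _ = w.2 * (w.2⁻¹ * x * w.2) * z.2⁻¹ := by rw [heq]
        _ = x * (w.2 * z.2⁻¹) := by group
    · rw [hact]; ext <;> simp [h]
    · rintro l ⟨-, hl2⟩
      rw [hact] at hl2
      have := congrArg Prod.snd hl2
      simp only at this
      rw [← this]; group
end

section
/- Let Q be a quandle, G a group, and (φ, ·) an augmentation of Q on G. Fix q ∈ Q and set x = φ(q). Then for every Wirtinger code (n, κ, ε): the map f̃ ↦ φ∘f̃ is a bijection from the set of Q-colourings f̃ of the code with f̃(0) = q onto the set of G-colourings f of the code with f(0) = x; moreover, if f = φ∘f̃, then f̃(n) = q·l(f), where l(f) is the longitude of f. -/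
/-- A quandle structure, given by operations `op = ◃` and `opInv = ◃⁻¹`. -/
def IsQuandle {Q : Type*} (op opInv : Q → Q → Q) : Prop :=
  (∀ a, op a a = a) ∧
  (∀ a b, opInv (op a b) b = a ∧ op (opInv a b) b = a) ∧
  (∀ a b c, op (op a b) c = op (op a c) (op b c))

/-- An augmentation of the quandle `(Q, op)` on the group `G`: a map `φ : Q → G` together
with a right action of `G` on `Q` such that `a ◃ b = a · φ(b)` and `φ(a·g) = g⁻¹ φ(a) g`. -/
def IsAugmentation {Q G : Type*} [Group G] (op : Q → Q → Q)
    (φ : Q → G) (act : Q → G → Q) : Prop :=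
  (∀ a, act a 1 = a) ∧
  (∀ a g h, act a (g * h) = act (act a g) h) ∧
  (∀ a b, op a b = act a (φ b)) ∧
  (∀ a g, φ (act a g) = g⁻¹ * φ a * g)

/-- A `G`-colouring of the Wirtinger code `(n, κ, ε)`. -/
def IsGCol {G : Type*} [Group G] {n : ℕ} (κ : Fin n → Fin (n + 1)) (ε : Fin n → ℤ)
    (f : Fin (n + 1) → G) : Prop :=
  ∀ i : Fin n, f i.succ = f (κ i) ^ (-ε i) * f i.castSucc * f (κ i) ^ (ε i)

/-- The longitude of a `G`-colouring `f`: the ordered product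
`∏_{i=1}^n f(i−1)^{−ε(i)} f(κ(i))^{ε(i)}`. -/
def longitude {G : Type*} [Group G] {n : ℕ} (κ : Fin n → Fin (n + 1)) (ε : Fin n → ℤ)
    (f : Fin (n + 1) → G) : G :=
  (List.ofFn fun i : Fin n => f i.castSucc ^ (-ε i) * f (κ i) ^ (ε i)).prod

/-- A `Q`-colouring of the Wirtinger code `(n, κ, ε)` for a quandle `(Q, op, opInv)`. -/
def IsQCol {Q : Type*} (op opInv : Q → Q → Q) {n : ℕ} (κ : Fin n → Fin (n + 1))
    (ε : Fin n → ℤ) (f : Fin (n + 1) → Q) : Prop :=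
  ∀ i : Fin n, f i.succ =
    if ε i = 1 then op (f i.castSucc) (f (κ i)) else opInv (f i.castSucc) (f (κ i))

/-- Given an augmentation `(φ, ·)` of a quandle `Q` on a group `G`, a basepoint
`q ∈ Q` with `x = φ(q)`, and a Wirtinger code, the map `f̃ ↦ φ∘f̃` is a bijection from
`Q`-colourings with `f̃(0) = q` onto `G`-colourings with `f(0) = x`; moreover the lift
satisfies `f̃(n) = q · l(φ∘f̃)`. -/
theorem stmt_4 {Q G : Type*} [Group G] (op opInv : Q → Q → Q)
    (hq : IsQuandle op opInv)
    (φ : Q → G) (act : Q → G → Q) (haug : IsAugmentation op φ act)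
    (q : Q) (x : G) (hx : x = φ q)
    (n : ℕ) (κ : Fin n → Fin (n + 1)) (ε : Fin n → ℤ) (hε : ∀ i, ε i = 1 ∨ ε i = -1) :
    Set.BijOn (fun f : Fin (n + 1) → Q => φ ∘ f)
      {f | IsQCol op opInv κ ε f ∧ f 0 = q}
      {f | IsGCol κ ε f ∧ f 0 = x} ∧
    (∀ f : Fin (n + 1) → Q, IsQCol op opInv κ ε f → f 0 = q →
      f (Fin.last n) = act q (longitude κ ε (φ ∘ f))) := by
  obtain ⟨hq1, hq2, hq3⟩ := hq
  obtain ⟨ha1, ha2, hop, hφ⟩ := haug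
  have hcancel' : ∀ a g, act (act a g⁻¹) g = a := fun a g => by
    rw [← ha2, inv_mul_cancel, ha1]
  have hopInv : ∀ a b, opInv a b = act a (φ b)⁻¹ := fun a b => by
    have h : op (act a (φ b)⁻¹) b = a := by rw [hop]; exact hcancel' a (φ b)
    conv_lhs => rw [← h]
    exact (hq2 _ b).1
  have hfix : ∀ a, act a (φ a) = a := fun a => by rw [← hop]; exact hq1 a
  have hfix' : ∀ a, act a (φ a)⁻¹ = a := fun a => by
    calc act a (φ a)⁻¹ = act (act a (φ a)) (φ a)⁻¹ := by rw [hfix]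
      _ = act a ((φ a) * (φ a)⁻¹) := (ha2 _ _ _).symm
      _ = a := by rw [mul_inv_cancel, ha1]
  have hfixz : ∀ a (e : ℤ), e = 1 ∨ e = -1 → act a (φ a ^ e) = a := by
    rintro a e (rfl | rfl)
    · simpa using hfix a
    · simpa using hfix' a
  have hεneg : ∀ i, -ε i = 1 ∨ -ε i = -1 := fun i => by rcases hε i with h | h <;> omega
  have hstep : ∀ f, IsQCol op opInv κ ε f → ∀ i,
      f i.succ = act (f i.castSucc) (φ (f (κ i)) ^ (ε i)) := by
    intro f hf i
    rcases hε i with h | h <;> rw [hf i, h] <;> simp [hop, hopInv]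
  have hfwd : ∀ f, IsQCol op opInv κ ε f → IsGCol κ ε (φ ∘ f) := by
    intro f hf i
    simp only [Function.comp_apply]
    rw [hstep f hf i, hφ, zpow_neg]
  -- key lemma: value of a Q-colouring in terms of partial products of the longitude
  have hkey : ∀ f, IsQCol op opInv κ ε f → f 0 = q → ∀ i : Fin (n + 1),
      f i = act q (((List.ofFn fun j : Fin n =>
        φ (f j.castSucc) ^ (-ε j) * φ (f (κ j)) ^ (ε j)).take (i : ℕ)).prod) := by
    intro f hf h0
    refine Fin.induction ?_ ?_
    · simpa [ha1] using h0
    · intro i ih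
      have hlen : (i : ℕ) < (List.ofFn fun j : Fin n =>
          φ (f j.castSucc) ^ (-ε j) * φ (f (κ j)) ^ (ε j)).length := by
        simpa using i.isLt
      have ih' : f i.castSucc = act q (((List.ofFn fun j : Fin n =>
          φ (f j.castSucc) ^ (-ε j) * φ (f (κ j)) ^ (ε j)).take (i : ℕ)).prod) := by
        simpa using ih
      rw [Fin.val_succ, List.prod_take_succ _ _ hlen, List.getElem_ofFn, ha2, ← ih', ha2,
        hfixz _ _ (hεneg i), hstep f hf i]
  have hlong : ∀ f : Fin (n + 1) → Q, IsQCol op opInv κ ε f → f 0 = q →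
      f (Fin.last n) = act q (longitude κ ε (φ ∘ f)) := by
    intro f hf h0
    have h := hkey f hf h0 (Fin.last n)
    rw [Fin.val_last, List.take_of_length_le (by simp)] at h
    simpa [longitude] using h
  -- surjectivity: construction of the lift
  have hsurj : ∀ f' : Fin (n + 1) → G, IsGCol κ ε f' → f' 0 = x →
      ∃ g, (IsQCol op opInv κ ε g ∧ g 0 = q) ∧ φ ∘ g = f' := by
    intro f' hG h0
    set P : ℕ → G := fun m => ((List.ofFn fun j : Fin n =>
      f' j.castSucc ^ (-ε j) * f' (κ j) ^ (ε j)).take m).prod with hP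
    have hPsucc : ∀ i : Fin n,
        P (↑i + 1) = P ↑i * (f' i.castSucc ^ (-ε i) * f' (κ i) ^ (ε i)) := by
      intro i
      have hlen : (i : ℕ) < (List.ofFn fun j : Fin n =>
          f' j.castSucc ^ (-ε j) * f' (κ j) ^ (ε j)).length := by simpa using i.isLt
      simp only [hP]
      rw [List.prod_take_succ _ _ hlen, List.getElem_ofFn]
    set g : Fin (n + 1) → Q := fun i => act q (P ↑i) with hg
    have key : ∀ i : Fin (n + 1), f' i = (P ↑i)⁻¹ * x * P ↑i := by
      refine Fin.induction ?_ ?_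
      · simpa [hP] using h0
      · intro i ih
        have ih' : f' i.castSucc = (P ↑i)⁻¹ * x * P ↑i := by simpa using ih
        rw [hG i, Fin.val_succ, hPsucc i,
          show x = P ↑i * f' i.castSucc * (P ↑i)⁻¹ by rw [ih']; group]
        group
    have hφg : ∀ i, φ (g i) = f' i := by
      intro i
      simp only [hg]
      rw [hφ, ← hx, ← key i]
    have hgc : ∀ i : Fin n, g i.castSucc = act q (P ↑i) := by
      intro i; simp only [hg, Fin.coe_castSucc]
    have hgQ : IsQCol op opInv κ ε g := by
      intro i
      have h1 : g i.succ = act (g i.castSucc) (f' (κ i) ^ ε i) := by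
        simp only [hg, Fin.val_succ, Fin.coe_castSucc]
        rw [hPsucc i, ha2, ha2, ← hφg i.castSucc]
        simp only [hg, Fin.coe_castSucc]
        rw [hfixz _ _ (hεneg i)]
      rcases hε i with h | h
      · simpa [h, hop, hφg] using h1
      · simpa [h, hopInv, hφg, zpow_neg, zpow_one] using h1
    refine ⟨g, ⟨hgQ, ?_⟩, funext hφg⟩
    simp [hg, hP, ha1]
  refine ⟨⟨?_, ?_, ?_⟩, hlong⟩
  · intro f hf
    exact ⟨hfwd f hf.1, by simp [Function.comp, hf.2, hx]⟩
  · intro a ha b hb hab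
    have hcomp : ∀ j, φ (a j) = φ (b j) := fun j => congrFun hab j
    have : ∀ i : Fin (n + 1), a i = b i := by
      refine Fin.induction ?_ ?_
      · rw [ha.2, hb.2]
      · intro i ih
        rw [hstep a ha.1 i, hstep b hb.1 i, ih, hcomp (κ i)]
    funext i; exact this i
  · intro f' hf'
    obtain ⟨g, hg1, hg2⟩ := hsurj f' hf'.1 hf'.2
    exact ⟨g, hg1, hg2⟩
end

section
/- Let Q be a quandle, G a group, and (φ, ·) an augmentation of Q on G. Fix q ∈ Q and set x = φ(q). Then for every Wirtinger code (n, κ, ε), the map f̃ ↦ φ∘f̃ is a bijection from the set of Q-colourings f̃ with f̃(0) = q and f̃(n) = q onto the set of G-colourings f with f(0) = x and q·l(f) = q, where l(f) denotes the longitude of f. -/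
/-!
Through the augmentation, the colouring rule of a `Q`-colouring reads
`f̃(i) = f̃(i-1) · φ(f̃(κ i))^(ε i)`. Hence a `Q`-colouring is determined by `f̃(0)` and `φ ∘ f̃`,
and every `G`-colouring `f` with `f(0) = φ(q)` lifts by this recursion starting at `q`, since
`φ(a · g) = g⁻¹ φ(a) g` is exactly the `G`-colouring rule. As `φ(a)` fixes `a`, the step may be
rewritten as `f̃(i) = f̃(i-1) · φ(f̃(i-1))^(-ε i) φ(f̃(κ i))^(ε i)`, and telescoping gives
`f̃(n) = f̃(0) · l(φ ∘ f̃)`: the closing condition `f̃(n) = q` becomes `q · l(f) = q`.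
-/

section

variable {Q G : Type*} [Group G] {act : Q → G → Q}

theorem last_eq_act_prod_ofFn (hone : ∀ a, act a 1 = a)
    (hmul : ∀ a g h, act a (g * h) = act (act a g) h) {n : ℕ} (w : Fin n → G)
    (h : Fin (n + 1) → Q) (hstep : ∀ i, h i.succ = act (h i.castSucc) (w i)) :
    h (Fin.last n) = act (h 0) (List.ofFn w).prod := by
  induction n with
  | zero => simp [hone]
  | succ n ih =>
    rw [List.ofFn_succ, List.prod_cons, hmul, ← Fin.castSucc_zero, ← hstep 0,
      ← Fin.succ_last]
    exact ih (fun i => w i.succ) (fun i => h i.succ) fun i => hstep i.succ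

end

def IsAugCol {Q G : Type*} [Group G] (φ : Q → G) (act : Q → G → Q) {n : ℕ}
    (κ : Fin n → Fin (n + 1)) (ε : Fin n → ℤ) (f : Fin (n + 1) → Q) : Prop :=
  ∀ i : Fin n, f i.succ = act (f i.castSucc) (φ (f (κ i)) ^ ε i)

namespace IsAugmentation

variable {Q G : Type*} [Group G] {op opInv : Q → Q → Q} {φ : Q → G} {act : Q → G → Q}

theorem act_act_inv (haug : IsAugmentation op φ act) (a : Q) (g : G) :
    act (act a g) g⁻¹ = a := by
  rw [← haug.2.1, mul_inv_cancel, haug.1]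

theorem opInv_eq_act (haug : IsAugmentation op φ act) (hq : IsQuandle op opInv) (a b : Q) :
    opInv a b = act a (φ b)⁻¹ := by
  conv_lhs => rw [← act_act_inv haug (opInv a b) (φ b)]
  rw [← haug.2.2.1, (hq.2.1 a b).2]

theorem act_zpow_self (haug : IsAugmentation op φ act) (hq : IsQuandle op opInv) (a : Q)
    (k : ℤ) : act a (φ a ^ k) = a := by
  have hself : act a (φ a) = a := by rw [← haug.2.2.1, hq.1]
  have hself_inv : act a (φ a)⁻¹ = a := by simpa only [hself] using act_act_inv haug a (φ a)
  induction k using Int.induction_on with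
  | zero => rw [zpow_zero, haug.1]
  | succ k ih => rw [zpow_add_one, haug.2.1, ih, hself]
  | pred k ih => rw [zpow_sub_one, haug.2.1, ih, hself_inv]

theorem ite_op_opInv_eq_act (haug : IsAugmentation op φ act) (hq : IsQuandle op opInv)
    {e : ℤ} (he : e = 1 ∨ e = -1) (a b : Q) :
    (if e = 1 then op a b else opInv a b) = act a (φ b ^ e) := by
  rcases he with rfl | rfl
  · simp [haug.2.2.1]
  · simp [opInv_eq_act haug hq]

variable {n : ℕ} {κ : Fin n → Fin (n + 1)} {ε : Fin n → ℤ}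

theorem isQCol_iff (haug : IsAugmentation op φ act) (hq : IsQuandle op opInv)
    (hε : ∀ i, ε i = 1 ∨ ε i = -1) {f : Fin (n + 1) → Q} :
    IsQCol op opInv κ ε f ↔ IsAugCol φ act κ ε f := by
  simp only [IsQCol, IsAugCol, ite_op_opInv_eq_act haug hq (hε _)]

theorem isGCol_comp (haug : IsAugmentation op φ act) {f : Fin (n + 1) → Q}
    (hf : IsAugCol φ act κ ε f) : IsGCol κ ε (φ ∘ f) := by
  intro i
  simp only [Function.comp_apply, hf i, haug.2.2.2, zpow_neg]

theorem last_eq_act_longitude (haug : IsAugmentation op φ act) (hq : IsQuandle op opInv)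
    {f : Fin (n + 1) → Q} (hf : IsAugCol φ act κ ε f) :
    f (Fin.last n) = act (f 0) (longitude κ ε (φ ∘ f)) := by
  refine last_eq_act_prod_ofFn haug.1 haug.2.1 _ f fun i => ?_
  rw [hf i, haug.2.1, Function.comp_apply, act_zpow_self haug hq]
  rfl

end IsAugmentation

section

variable {Q G : Type*} [Group G] {n : ℕ}

def liftColouring (act : Q → G → Q) (κ : Fin n → Fin (n + 1)) (ε : Fin n → ℤ)
    (f : Fin (n + 1) → G) (q : Q) (i : Fin (n + 1)) : Q :=
  Fin.induction q (fun j a => act a (f (κ j) ^ ε j)) i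

variable {op : Q → Q → Q} {φ : Q → G} {act : Q → G → Q} {κ : Fin n → Fin (n + 1)}
  {ε : Fin n → ℤ}

@[simp]
theorem liftColouring_zero (f : Fin (n + 1) → G) (q : Q) : liftColouring act κ ε f q 0 = q :=
  rfl

theorem liftColouring_succ (f : Fin (n + 1) → G) (q : Q) (i : Fin n) :
    liftColouring act κ ε f q i.succ =
      act (liftColouring act κ ε f q i.castSucc) (f (κ i) ^ ε i) :=
  Fin.induction_succ _ _ _

theorem eq_liftColouring {f : Fin (n + 1) → Q} (hf : IsAugCol φ act κ ε f) :
    f = liftColouring act κ ε (φ ∘ f) (f 0) := by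
  funext i
  induction i using Fin.induction with
  | zero => rfl
  | succ i ih => rw [hf i, liftColouring_succ, ← ih, Function.comp_apply]

theorem comp_liftColouring (haug : IsAugmentation op φ act) {f : Fin (n + 1) → G}
    (hf : IsGCol κ ε f) {q : Q} (hq : φ q = f 0) : φ ∘ liftColouring act κ ε f q = f := by
  funext i
  induction i using Fin.induction with
  | zero => exact hq
  | succ i ih =>
    rw [Function.comp_apply, liftColouring_succ, haug.2.2.2, ← Function.comp_apply (f := φ), ih,
      hf i, zpow_neg]

end

/-- Given an augmentation `(φ, ·)` of a quandle `Q` on a group `G`, a basepoint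
`q ∈ Q` with `x = φ(q)`, and a Wirtinger code, the map `f̃ ↦ φ∘f̃` is a bijection from
`Q`-colourings with `f̃(0) = q` and `f̃(n) = q` onto `G`-colourings with `f(0) = x` and
`q · l(f) = q`. -/
theorem stmt_5 {Q G : Type*} [Group G] (op opInv : Q → Q → Q)
    (hq : IsQuandle op opInv)
    (φ : Q → G) (act : Q → G → Q) (haug : IsAugmentation op φ act)
    (q : Q) (x : G) (hx : x = φ q)
    (n : ℕ) (κ : Fin n → Fin (n + 1)) (ε : Fin n → ℤ) (hε : ∀ i, ε i = 1 ∨ ε i = -1) :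
    Set.BijOn (fun f : Fin (n + 1) → Q => φ ∘ f)
      {f | IsQCol op opInv κ ε f ∧ f 0 = q ∧ f (Fin.last n) = q}
      {f | IsGCol κ ε f ∧ f 0 = x ∧ act q (longitude κ ε f) = q} := by
  simp only [haug.isQCol_iff hq hε]
  refine ⟨?_, ?_, ?_⟩
  · rintro f ⟨hf, h0, hlast⟩
    refine ⟨haug.isGCol_comp hf, by simp [h0, hx], ?_⟩
    rw [← h0, ← haug.last_eq_act_longitude hq hf, hlast, h0]
  · rintro f₁ ⟨hf₁, h₁, -⟩ f₂ ⟨hf₂, h₂, -⟩ (hφ : φ ∘ f₁ = φ ∘ f₂)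
    rw [eq_liftColouring hf₁, eq_liftColouring hf₂, hφ, h₁, h₂]
  · rintro f ⟨hf, h0, hl⟩
    have hφ := comp_liftColouring haug hf (hx ▸ h0).symm
    have hlift : IsAugCol φ act κ ε (liftColouring act κ ε f q) := fun i => by
      rw [liftColouring_succ, ← Function.comp_apply (f := φ), hφ]
    refine ⟨_, ⟨hlift, rfl, ?_⟩, hφ⟩
    rw [haug.last_eq_act_longitude hq hlift, hφ, liftColouring_zero, hl]
end

section
/- Let K be a nontrivial commutative ring, Q a quandle, Λ an abelian group written multiplicatively, A = K[Λ] the group algebra of Λ over K, V = Q →₀ A the free A-module on Q with standard basis (e_a)_{a∈Q}, and λ : Q × Q → Λ any map. Let c̃ : V ⊗_A V → V ⊗_A V be the A-linear map determined by c̃(e_a ⊗ e_b) = λ(a,b) · (e_b ⊗ e_{a◃b}). Then c̃ is an A-linear automorphism, and c̃ satisfies the Yang–Baxter equation (c̃ ⊗ id_V) ∘ (id_V ⊗ c̃) ∘ (c̃ ⊗ id_V) = (id_V ⊗ c̃) ∘ (c̃ ⊗ id_V) ∘ (id_V ⊗ c̃) if and only if λ(a,c)·λ(a◃c, b◃c)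 = λ(a,b)·λ(a◃b, c) for all a, b, c ∈ Q. -/
open scoped TensorProduct

/-- The endomorphism `c ⊗ id` of `(V ⊗ V) ⊗ V`. -/
noncomputable def yb12 {R V : Type*} [CommRing R] [AddCommGroup V] [Module R V]
    (c : V ⊗[R] V →ₗ[R] V ⊗[R] V) :
    (V ⊗[R] V) ⊗[R] V →ₗ[R] (V ⊗[R] V) ⊗[R] V :=
  LinearMap.rTensor V c

/-- The endomorphism `id ⊗ c` of `(V ⊗ V) ⊗ V`, transported along the associator. -/
noncomputable def yb23 {R V : Type*} [CommRing R] [AddCommGroup V] [Module R V]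
    (c : V ⊗[R] V →ₗ[R] V ⊗[R] V) :
    (V ⊗[R] V) ⊗[R] V →ₗ[R] (V ⊗[R] V) ⊗[R] V :=
  (TensorProduct.assoc R V V V).symm.toLinearMap ∘ₗ
    LinearMap.lTensor V c ∘ₗ (TensorProduct.assoc R V V V).toLinearMap

/-!
On the basis `e_a ⊗ e_b` of `V ⊗ V` the map `c̃` is monomial: it sends `e_a ⊗ e_b` to a unit
multiple of `e_b ⊗ e_{a◃b}`, and `(a, b) ↦ (b, a ◃ b)` is a bijection of `Q × Q` because right
translations in a quandle are invertible; so `c̃` is invertible. On the basis of `V ⊗ V ⊗ V`,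
self-distributivity makes both sides of the Yang–Baxter equation send `e_a ⊗ e_b ⊗ e_c` to
multiples of the same basis vector `e_c ⊗ e_{b◃c} ⊗ e_{(a◃b)◃c}`, with coefficients
`λ(a,b) λ(a◃b,c) λ(b,c)` and `λ(a,c) λ(a◃c,b◃c) λ(b,c)`; cancelling the unit `λ(b,c)` gives the
criterion.
-/

section TwistedShelfBraiding

variable {R V ι : Type*} [CommRing R] [AddCommGroup V] [Module R V]
  (b : Module.Basis ι R V) {op : ι → ι → ι} {r : ι → ι → R}
  {c : V ⊗[R] V →ₗ[R] V ⊗[R] V}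

theorem yb12_tmul_basis (hc : ∀ i j, c (b i ⊗ₜ b j) = r i j • (b j ⊗ₜ b (op i j))) (i j k : ι) :
    yb12 c ((b i ⊗ₜ b j) ⊗ₜ b k) = r i j • ((b j ⊗ₜ b (op i j)) ⊗ₜ b k) := by
  rw [yb12, LinearMap.rTensor_tmul, hc, ← TensorProduct.smul_tmul']

theorem yb23_tmul_basis (hc : ∀ i j, c (b i ⊗ₜ b j) = r i j • (b j ⊗ₜ b (op i j))) (i j k : ι) :
    yb23 c ((b i ⊗ₜ b j) ⊗ₜ b k) = r j k • ((b i ⊗ₜ b k) ⊗ₜ b (op j k)) := by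
  simp only [yb23, LinearMap.comp_apply, LinearEquiv.coe_coe, TensorProduct.assoc_tmul,
    LinearMap.lTensor_tmul, hc, TensorProduct.tmul_smul, map_smul,
    TensorProduct.assoc_symm_tmul]

theorem bijective_of_basis_tmul_eq_smul
    (hc : ∀ i j, c (b i ⊗ₜ b j) = r i j • (b j ⊗ₜ b (op i j)))
    (hr : ∀ i j, IsUnit (r i j)) (opInv : ι → ι → ι)
    (hop : ∀ i j, opInv (op i j) j = i ∧ op (opInv i j) j = i) :
    Function.Bijective c := by
  let bb := b.tensorProduct b
  have hbb (p : ι × ι) : c (bb p) = r p.1 p.2 • bb (p.2, op p.1 p.2) := by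
    simp only [bb, Module.Basis.tensorProduct_apply', hc]
  let d : V ⊗[R] V →ₗ[R] V ⊗[R] V := bb.constr R fun p =>
    Ring.inverse (r (opInv p.2 p.1) p.1) • bb (opInv p.2 p.1, p.1)
  have hdc : d ∘ₗ c = LinearMap.id := bb.ext fun ⟨i, j⟩ => by
    rw [LinearMap.comp_apply, hbb, map_smul, Module.Basis.constr_basis]
    dsimp only
    rw [(hop i j).1, smul_smul, Ring.mul_inverse_cancel _ (hr i j), one_smul, LinearMap.id_apply]
  have hcd : c ∘ₗ d = LinearMap.id := bb.ext fun ⟨j, k⟩ => by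
    rw [LinearMap.comp_apply, Module.Basis.constr_basis, map_smul, hbb]
    dsimp only
    rw [(hop k j).2, smul_smul, Ring.inverse_mul_cancel _ (hr _ _), one_smul, LinearMap.id_apply]
  exact Function.bijective_iff_has_inverse.mpr
    ⟨d, LinearMap.congr_fun hdc, LinearMap.congr_fun hcd⟩

theorem yangBaxter_iff_of_basis_tmul_eq_smul
    (hc : ∀ i j, c (b i ⊗ₜ b j) = r i j • (b j ⊗ₜ b (op i j)))
    (hop : ∀ i j k, op (op i j) k = op (op i k) (op j k)) :
    yb12 c ∘ₗ yb23 c ∘ₗ yb12 c = yb23 c ∘ₗ yb12 c ∘ₗ yb23 c ↔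
      ∀ i j k, r i j * r (op i j) k * r j k = r i k * r (op i k) (op j k) * r j k := by
  let bbb := (b.tensorProduct b).tensorProduct b
  have hbbb : ⇑bbb = fun p => (b p.1.1 ⊗ₜ b p.1.2) ⊗ₜ b p.2 := by
    ext p; simp only [bbb, Module.Basis.tensorProduct_apply']
  have key (i j k : ι) :
      ((yb12 c ∘ₗ yb23 c ∘ₗ yb12 c) ((b i ⊗ₜ b j) ⊗ₜ b k) =
        (yb23 c ∘ₗ yb12 c ∘ₗ yb23 c) ((b i ⊗ₜ b j) ⊗ₜ b k)) ↔
      r i j * r (op i j) k * r j k = r i k * r (op i k) (op j k) * r j k := by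
    simp only [LinearMap.comp_apply, yb12_tmul_basis b hc, yb23_tmul_basis b hc, map_smul,
      smul_smul]
    rw [hop i j k, mul_comm (r j k), mul_right_comm _ (r j k)]
    have hli := hbbb ▸ bbb.linearIndependent
    exact (hli.smul_left_injective ((k, op j k), op (op i k) (op j k))).eq_iff
  constructor
  · exact fun h i j k => (key i j k).mp (LinearMap.congr_fun h _)
  · intro h
    refine bbb.ext fun ⟨⟨i, j⟩, k⟩ => ?_
    rw [hbbb]
    exact (key i j k).mpr (h i j k)

end TwistedShelfBraiding

/-- Let `K` be a nontrivial commutative ring, `Q` a quandle, `Λ` an abelian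
group, `A = K[Λ]` the group algebra, `V = Q →₀ A` the free `A`-module on `Q`, and
`λ : Q × Q → Λ` any map.  The `A`-linear map `c̃` determined by
`c̃(e_a ⊗ e_b) = λ(a,b) · (e_b ⊗ e_{a◃b})` is an `A`-linear automorphism, and it satisfies
the Yang–Baxter equation iff `λ(a,c)·λ(a◃c, b◃c) = λ(a,b)·λ(a◃b, c)` for all `a, b, c`. -/
theorem stmt_7 {K Λ Q : Type*} [CommRing K] [Nontrivial K] [CommGroup Λ]
    (op opInv : Q → Q → Q) (hq : IsQuandle op opInv)
    (lam : Q → Q → Λ)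
    (ct : (Q →₀ MonoidAlgebra K Λ) ⊗[MonoidAlgebra K Λ] (Q →₀ MonoidAlgebra K Λ)
      →ₗ[MonoidAlgebra K Λ]
      (Q →₀ MonoidAlgebra K Λ) ⊗[MonoidAlgebra K Λ] (Q →₀ MonoidAlgebra K Λ))
    (hct : ∀ a b : Q,
      ct (Finsupp.single a (1 : MonoidAlgebra K Λ)
            ⊗ₜ[MonoidAlgebra K Λ] Finsupp.single b (1 : MonoidAlgebra K Λ)) =
        MonoidAlgebra.of K Λ (lam a b) •
          (Finsupp.single b (1 : MonoidAlgebra K Λ)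
            ⊗ₜ[MonoidAlgebra K Λ] Finsupp.single (op a b) (1 : MonoidAlgebra K Λ))) :
    Function.Bijective ct ∧
    (yb12 ct ∘ₗ yb23 ct ∘ₗ yb12 ct = yb23 ct ∘ₗ yb12 ct ∘ₗ yb23 ct ↔
      ∀ a b c : Q, lam a c * lam (op a c) (op b c) = lam a b * lam (op a b) c) := by
  obtain ⟨-, hinv, hdist⟩ := hq
  let e : Module.Basis Q (MonoidAlgebra K Λ) (Q →₀ MonoidAlgebra K Λ) := Finsupp.basisSingleOne
  have hr (a b : Q) : IsUnit (MonoidAlgebra.of K Λ (lam a b)) := (Group.isUnit _).map _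
  refine ⟨bijective_of_basis_tmul_eq_smul e hct hr opInv hinv, ?_⟩
  rw [yangBaxter_iff_of_basis_tmul_eq_smul e hct hdist]
  refine forall₃_congr fun a b c => ?_
  rw [(hr b c).mul_left_inj, ← map_mul, ← map_mul, MonoidAlgebra.of_injective.eq_iff, eq_comm]
end

section
/- Let Λ • Q̃ →p Q be a central extension of a quandle Q by an abelian group Λ (written additively), and let s : Q → Q̃ be a section of p, i.e. p∘s = id_Q. Then for all a, b ∈ Q there is a unique element λ(a,b) ∈ Λ with s(a) ◃ s(b) = λ(a,b) • s(a ◃ b), and the resulting map λ : Q × Q → Λ is a quandle 2-cocycle: λ(a,a) = 0 for all a ∈ Q, and λ(a,c) + λ(a◃c, b◃c) = λ(a,b) + λ(a◃b, c) for all a, b, c ∈ Q. -/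
/-- A central extension `Λ • Q̃ → Q` of the quandle `Q` by the abelian group `Λ`:
a quandle `Q̃`, a left `Λ`-action on `Q̃` satisfying `(λ•z) ◃ w = λ•(z ◃ w)` and
`z ◃ (λ•w) = z ◃ w`, and a surjective quandle homomorphism `p : Q̃ → Q` such that the
action is free and the fibres of `p` are exactly the `Λ`-orbits. -/
structure IsCentralExt {Q Qt Λ : Type*} [AddCommGroup Λ]
    (opQ opQInv : Q → Q → Q) (opT opTInv : Qt → Qt → Qt)
    (act : Λ → Qt → Qt) (p : Qt → Q) : Prop where
  quandle_base : IsQuandle opQ opQInv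
  quandle_total : IsQuandle opT opTInv
  act_zero : ∀ z, act 0 z = z
  act_add : ∀ l l' z, act (l + l') z = act l (act l' z)
  act_op_left : ∀ l z w, opT (act l z) w = act l (opT z w)
  act_op_right : ∀ l z w, opT z (act l w) = opT z w
  p_surjective : Function.Surjective p
  p_hom : ∀ z w, p (opT z w) = opQ (p z) (p w)
  act_free : ∀ l z, act l z = z → l = 0
  fibres_orbits : ∀ z w, p z = p w ↔ ∃ l, act l z = w

/-- Given a central extension `Λ • Q̃ → Q` and a section `s` of `p`, for all
`a, b ∈ Q` there is a unique `λ(a,b) ∈ Λ` with `s(a) ◃ s(b) = λ(a,b) • s(a ◃ b)`, and the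
resulting map is a quandle 2-cocycle. -/
theorem stmt_8 {Q Qt Λ : Type*} [AddCommGroup Λ]
    (opQ opQInv : Q → Q → Q) (opT opTInv : Qt → Qt → Qt)
    (act : Λ → Qt → Qt) (p : Qt → Q)
    (hext : IsCentralExt opQ opQInv opT opTInv act p)
    (s : Q → Qt) (hs : ∀ a, p (s a) = a) :
    (∀ a b : Q, ∃! l : Λ, opT (s a) (s b) = act l (s (opQ a b))) ∧
    (∀ lam : Q → Q → Λ,
      (∀ a b, opT (s a) (s b) = act (lam a b) (s (opQ a b))) →
      (∀ a, lam a a = 0) ∧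
      (∀ a b c, lam a c + lam (opQ a c) (opQ b c) = lam a b + lam (opQ a b) c)) := by
  -- injectivity of the action in the scalar
  have hinj : ∀ (l l' : Λ) (z : Qt), act l z = act l' z → l = l' := by
    intro l l' z h
    have h2 : act (-l' + l) z = z := by
      rw [hext.act_add, h, ← hext.act_add, neg_add_cancel, hext.act_zero]
    have := hext.act_free _ _ h2
    exact (neg_add_eq_zero.mp this).symm
  constructor
  · intro a b
    have hp : p (s (opQ a b)) = p (opT (s a) (s b)) := by
      rw [hext.p_hom, hs, hs, hs]
    obtain ⟨l, hl⟩ := (hext.fibres_orbits _ _).1 hp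
    exact ⟨l, hl.symm, fun l' hl' => hinj l' l _ (hl'.symm.trans hl.symm)⟩
  · intro lam hlam
    constructor
    · intro a
      have h1 : opT (s a) (s a) = s a := hext.quandle_total.1 (s a)
      have h2 := hlam a a
      rw [h1, hext.quandle_base.1 a] at h2
      exact hinj _ _ _ (h2.symm.trans (hext.act_zero (s a)).symm)
    · intro a b c
      have lhs : opT (opT (s a) (s b)) (s c)
          = act (lam a b + lam (opQ a b) c) (s (opQ (opQ a b) c)) := by
        rw [hlam a b, hext.act_op_left, hlam (opQ a b) c, ← hext.act_add]
      have rhs : opT (opT (s a) (s c)) (opT (s b) (s c))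
          = act (lam a c + lam (opQ a c) (opQ b c)) (s (opQ (opQ a c) (opQ b c))) := by
        rw [hlam a c, hlam b c, hext.act_op_left, hext.act_op_right,
          hlam (opQ a c) (opQ b c), ← hext.act_add]
      have hq : opT (opT (s a) (s b)) (s c) = opT (opT (s a) (s c)) (opT (s b) (s c)) :=
        hext.quandle_total.2.2 _ _ _
      have hbase : opQ (opQ a b) c = opQ (opQ a c) (opQ b c) := hext.quandle_base.2.2 a b c
      rw [lhs, rhs, hbase] at hq
      exact (hinj _ _ _ hq).symm
end

section
/- Let Q be a quandle, Λ an abelian group (written additively), λ : Q × Q → Λ any map, and μ : Q → Λ any map; define λ'(a,b) = λ(a,b) + μ(a) − μ(a ◃ b). Then for every Wirtinger code (n, κ, ε) and every Q-colouring f of the code that is closed, i.e. f(n) = f(0), the weights agree: W_{λ'}(f) = W_λ(f). -/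
/-- The weight `W_λ(f) = ∑ᵢ wᵢ` of a `Q`-colouring `f`, where `wᵢ = λ(f(i−1), f(κ(i)))`
at a positive crossing and `wᵢ = −λ(f(i), f(κ(i)))` at a negative one. -/
def weight {Q Λ : Type*} [AddCommGroup Λ] (lam : Q → Q → Λ) {n : ℕ}
    (κ : Fin n → Fin (n + 1)) (ε : Fin n → ℤ) (f : Fin (n + 1) → Q) : Λ :=
  ∑ i : Fin n,
    if ε i = 1 then lam (f i.castSucc) (f (κ i)) else -lam (f i.succ) (f (κ i))

/-- Changing a cochain `λ` by the coboundary of `μ`, i.e. passing to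
`λ'(a,b) = λ(a,b) + μ(a) − μ(a ◃ b)`, does not change the weight of a closed colouring. -/
theorem stmt_10 {Q Λ : Type*} [AddCommGroup Λ]
    (op opInv : Q → Q → Q) (hq : IsQuandle op opInv)
    (lam : Q → Q → Λ) (μ : Q → Λ)
    (n : ℕ) (κ : Fin n → Fin (n + 1)) (ε : Fin n → ℤ) (hε : ∀ i, ε i = 1 ∨ ε i = -1)
    (f : Fin (n + 1) → Q) (hf : IsQCol op opInv κ ε f)
    (hclosed : f (Fin.last n) = f 0) :
    weight (fun a b => lam a b + μ a - μ (op a b)) κ ε f = weight lam κ ε f := by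
  unfold weight
  rw [← sub_eq_zero, ← Finset.sum_sub_distrib]
  have key : ∀ i : Fin n,
      ((if ε i = 1 then lam (f i.castSucc) (f (κ i)) + μ (f i.castSucc)
            - μ (op (f i.castSucc) (f (κ i)))
        else -(lam (f i.succ) (f (κ i)) + μ (f i.succ) - μ (op (f i.succ) (f (κ i))))) -
       (if ε i = 1 then lam (f i.castSucc) (f (κ i)) else -lam (f i.succ) (f (κ i))))
      = μ (f i.castSucc) - μ (f i.succ) := by
    intro i
    have hfi := hf i
    by_cases h : ε i = 1
    · simp only [h, if_pos rfl, if_true]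
      rw [hfi, if_pos h]
      abel
    · simp only [h, if_neg h, if_false]
      rw [hfi, if_neg h, (hq.2.1 (f i.castSucc) (f (κ i))).2]
      abel
  rw [Finset.sum_congr rfl (fun i _ => key i), Finset.sum_sub_distrib]
  have h1 : ∑ i : Fin n, μ (f i.castSucc) = (∑ i : Fin (n+1), μ (f i)) - μ (f (Fin.last n)) := by
    rw [Fin.sum_univ_castSucc]; abel
  have h2 : ∑ i : Fin n, μ (f i.succ) = (∑ i : Fin (n+1), μ (f i)) - μ (f 0) := by
    rw [Fin.sum_univ_succ]; abel
  rw [h1, h2, hclosed]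
  abel
end

section
/- Let Q be a quandle, Λ an abelian group (written additively), and λ : Q × Q → Λ a quandle 2-cocycle. Then for every c ∈ Q the translated cochain (a,b) ↦ λ(a ◃ c, b ◃ c) differs from λ by a coboundary: there exists μ : Q → Λ with λ(a ◃ c, b ◃ c) = λ(a,b) + μ(a) − μ(a ◃ b) for all a, b ∈ Q. Consequently, for every Wirtinger code (n, κ, ε), every closed Q-colouring f of the code (f(n) = f(0)), and every c ∈ Q, the translated map f ◃ c : i ↦ f(i) ◃ c is again a closed Q-colouring, and W_λ(f ◃ c) = W_λ(f). -/
/-!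
Rewriting the cocycle identity as `λ(a ◃ c, b ◃ c) = λ(a, b) + λ(a ◃ b, c) − λ(a, c)` exhibits the
translated cocycle as `λ` plus the coboundary of `μ = −λ(·, c)`. Right distributivity makes
translation by `c` a quandle automorphism, so it maps colourings to colourings. At a positive
crossing `f(i−1) ◃ f(κ(i)) = f(i)`, at a negative one `f(i) ◃ f(κ(i)) = f(i−1)`; either way the
coboundary changes the `i`-th weight term by `μ(f(i−1)) − μ(f(i))`, and these telescope to zero
along a closed colouring.
-/

theorem Fin.sum_castSucc_sub_succ {M : Type*} [AddCommGroup M] {n : ℕ} (g : Fin (n + 1) → M) :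
    ∑ i : Fin n, (g i.castSucc - g i.succ) = g 0 - g (Fin.last n) := by
  induction n with
  | zero => simp
  | succ n ih =>
    have h := ih (fun i => g i.castSucc)
    rw [Fin.sum_univ_castSucc]
    simp only [Fin.succ_castSucc, Fin.castSucc_zero, Fin.succ_last] at h ⊢
    rw [h]
    abel

section Translation

variable {Q Λ : Type*} [AddCommGroup Λ] {op opInv : Q → Q → Q}

theorem cocycle_translate_eq_add_coboundary {lam : Q → Q → Λ}
    (hcoc : ∀ a b c, lam a c + lam (op a c) (op b c) = lam a b + lam (op a b) c) (c a b : Q) :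
    lam (op a c) (op b c) = lam a b + (-lam a c) - (-lam (op a b) c) := by
  rw [← add_right_inj (lam a c), hcoc]
  abel

theorem opInv_op_op (hinv : ∀ a b, opInv (op a b) b = a ∧ op (opInv a b) b = a)
    (hdist : ∀ a b c, op (op a b) c = op (op a c) (op b c)) (a b c : Q) :
    opInv (op a c) (op b c) = op (opInv a b) c := by
  rw [← (hinv (op (opInv a b) c) (op b c)).1, ← hdist, (hinv a b).2]

variable {n : ℕ} {κ : Fin n → Fin (n + 1)} {ε : Fin n → ℤ} {f : Fin (n + 1) → Q}

theorem IsQCol.op_right (hinv : ∀ a b, opInv (op a b) b = a ∧ op (opInv a b) b = a)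
    (hdist : ∀ a b c, op (op a b) c = op (op a c) (op b c))
    (hf : IsQCol op opInv κ ε f) (c : Q) :
    IsQCol op opInv κ ε (fun i => op (f i) c) := by
  intro i
  change op (f i.succ) c = _
  rw [hf i]
  split_ifs
  · exact hdist _ _ _
  · exact (opInv_op_op hinv hdist _ _ _).symm

theorem weight_op_right_of_coboundary (hinv : ∀ a b, op (opInv a b) b = a)
    (hf : IsQCol op opInv κ ε f) {lam : Q → Q → Λ} {μ : Q → Λ} {c : Q}
    (hμ : ∀ a b, lam (op a c) (op b c) = lam a b + μ a - μ (op a b)) :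
    weight lam κ ε (fun i => op (f i) c) = weight lam κ ε f + (μ (f 0) - μ (f (Fin.last n))) := by
  have hterm : ∀ i : Fin n,
      (if ε i = 1 then lam (op (f i.castSucc) c) (op (f (κ i)) c)
        else -lam (op (f i.succ) c) (op (f (κ i)) c)) =
      (if ε i = 1 then lam (f i.castSucc) (f (κ i)) else -lam (f i.succ) (f (κ i))) +
        (μ (f i.castSucc) - μ (f i.succ)) := by
    intro i
    have hi := hf i
    split_ifs at hi ⊢
    · rw [hμ, hi]
      abel
    · rw [hμ, hi, hinv]
      abel
  rw [weight, weight, Finset.sum_congr rfl fun i _ => hterm i, Finset.sum_add_distrib,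
    Fin.sum_castSucc_sub_succ (fun i => μ (f i))]

end Translation

theorem stmt_11_general {Q Λ : Type*} [AddCommGroup Λ]
    (op opInv : Q → Q → Q) (hq : IsQuandle op opInv)
    (lam : Q → Q → Λ)
    (hcoc2 : ∀ a b c, lam a c + lam (op a c) (op b c) = lam a b + lam (op a b) c) :
    (∀ c : Q, ∃ μ : Q → Λ,
      ∀ a b : Q, lam (op a c) (op b c) = lam a b + μ a - μ (op a b)) ∧
    (∀ (n : ℕ) (κ : Fin n → Fin (n + 1)) (ε : Fin n → ℤ), (∀ i, ε i = 1 ∨ ε i = -1) →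
      ∀ f : Fin (n + 1) → Q, IsQCol op opInv κ ε f → f (Fin.last n) = f 0 →
      ∀ c : Q,
        IsQCol op opInv κ ε (fun i => op (f i) c) ∧
        op (f (Fin.last n)) c = op (f 0) c ∧
        weight lam κ ε (fun i => op (f i) c) = weight lam κ ε f) := by
  obtain ⟨-, hinv, hdist⟩ := hq
  refine ⟨fun c => ⟨_, cocycle_translate_eq_add_coboundary hcoc2 c⟩, ?_⟩
  intro n κ ε _ f hf hclosed c
  refine ⟨hf.op_right hinv hdist c, by rw [hclosed], ?_⟩
  rw [weight_op_right_of_coboundary (fun a b => (hinv a b).2) hf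
    (cocycle_translate_eq_add_coboundary hcoc2 c), hclosed, sub_self, add_zero]

/-- For a quandle 2-cocycle `λ` and any `c ∈ Q`, the translated cochain
`(a,b) ↦ λ(a ◃ c, b ◃ c)` differs from `λ` by a coboundary; consequently translating a
closed colouring by `c` yields again a closed colouring of the same weight. -/
theorem stmt_11 {Q Λ : Type*} [AddCommGroup Λ]
    (op opInv : Q → Q → Q) (hq : IsQuandle op opInv)
    (lam : Q → Q → Λ)
    (hcoc1 : ∀ a, lam a a = 0)
    (hcoc2 : ∀ a b c, lam a c + lam (op a c) (op b c) = lam a b + lam (op a b) c) :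
    (∀ c : Q, ∃ μ : Q → Λ,
      ∀ a b : Q, lam (op a c) (op b c) = lam a b + μ a - μ (op a b)) ∧
    (∀ (n : ℕ) (κ : Fin n → Fin (n + 1)) (ε : Fin n → ℤ), (∀ i, ε i = 1 ∨ ε i = -1) →
      ∀ f : Fin (n + 1) → Q, IsQCol op opInv κ ε f → f (Fin.last n) = f 0 →
      ∀ c : Q,
        IsQCol op opInv κ ε (fun i => op (f i) c) ∧
        op (f (Fin.last n)) c = op (f 0) c ∧
        weight lam κ ε (fun i => op (f i) c) = weight lam κ ε f) :=
  stmt_11_general op opInv hq lam hcoc2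
end

section
/- Let Λ • Q̃ →p Q be a central extension of a quandle Q by an abelian group Λ (written additively), let s : Q → Q̃ be a section of p with associated 2-cocycle λ (so s(a) ◃ s(b) = λ(a,b) • s(a ◃ b)). Then for every Wirtinger code (n, κ, ε), every q ∈ Q, and every Q-colouring f of the code with f(0) = q, there is a unique Q̃-colouring f̃ of the code with p∘f̃ = f and f̃(0) = s(q); moreover, if f is closed, i.e. f(n) = f(0) = q, then f̃(n) = W_λ(f) • s(q). -/
/-- Partial weight: sum of the first `i` crossing weights. -/
def pw {Q Λ : Type*} [AddCommGroup Λ] (lam : Q → Q → Λ) {n : ℕ}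
    (κ : Fin n → Fin (n + 1)) (ε : Fin n → ℤ) (f : Fin (n + 1) → Q)
    (i : Fin (n + 1)) : Λ :=
  ∑ j ∈ Finset.univ.filter (fun j : Fin n => (j : ℕ) < (i : ℕ)),
    (if ε j = 1 then lam (f j.castSucc) (f (κ j)) else -lam (f j.succ) (f (κ j)))

lemma pw_zero {Q Λ : Type*} [AddCommGroup Λ] (lam : Q → Q → Λ) {n : ℕ}
    (κ : Fin n → Fin (n + 1)) (ε : Fin n → ℤ) (f : Fin (n + 1) → Q) :
    pw lam κ ε f 0 = 0 := by
  simp [pw]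

lemma pw_succ {Q Λ : Type*} [AddCommGroup Λ] (lam : Q → Q → Λ) {n : ℕ}
    (κ : Fin n → Fin (n + 1)) (ε : Fin n → ℤ) (f : Fin (n + 1) → Q) (i : Fin n) :
    pw lam κ ε f i.succ = pw lam κ ε f i.castSucc +
      (if ε i = 1 then lam (f i.castSucc) (f (κ i)) else -lam (f i.succ) (f (κ i))) := by
  unfold pw
  have hset : (Finset.univ.filter (fun j : Fin n => (j : ℕ) < ((i.succ : Fin (n+1)) : ℕ)))
      = insert i (Finset.univ.filter (fun j : Fin n => (j : ℕ) < ((i.castSucc : Fin (n+1)) : ℕ))) := by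
    ext j
    simp only [Finset.mem_filter, Finset.mem_univ, true_and, Finset.mem_insert,
      Fin.val_succ, Fin.coe_castSucc, Nat.lt_succ_iff_lt_or_eq, Fin.ext_iff]
    tauto
  rw [hset, Finset.sum_insert (by simp)]
  exact add_comm _ _

lemma pw_last {Q Λ : Type*} [AddCommGroup Λ] (lam : Q → Q → Λ) {n : ℕ}
    (κ : Fin n → Fin (n + 1)) (ε : Fin n → ℤ) (f : Fin (n + 1) → Q) :
    pw lam κ ε f (Fin.last n) = weight lam κ ε f := by
  unfold pw weight
  congr 1
  ext j
  simp [j.is_lt]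

/-- Given a central extension `Λ • Q̃ → Q` with section `s` and associated
2-cocycle `λ`, every `Q`-colouring `f` with `f(0) = q` lifts uniquely to a `Q̃`-colouring
`f̃` with `p∘f̃ = f` and `f̃(0) = s(q)`; if `f` is closed then `f̃(n) = W_λ(f) • s(q)`. -/
theorem stmt_12 {Q Qt Λ : Type*} [AddCommGroup Λ]
    (opQ opQInv : Q → Q → Q) (opT opTInv : Qt → Qt → Qt)
    (act : Λ → Qt → Qt) (p : Qt → Q)
    (hext : IsCentralExt opQ opQInv opT opTInv act p)
    (s : Q → Qt) (hs : ∀ a, p (s a) = a)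
    (lam : Q → Q → Λ)
    (hlam : ∀ a b, opT (s a) (s b) = act (lam a b) (s (opQ a b)))
    (n : ℕ) (κ : Fin n → Fin (n + 1)) (ε : Fin n → ℤ) (hε : ∀ i, ε i = 1 ∨ ε i = -1)
    (q : Q) (f : Fin (n + 1) → Q) (hf : IsQCol opQ opQInv κ ε f) (hf0 : f 0 = q) :
    (∃! ft : Fin (n + 1) → Qt,
      IsQCol opT opTInv κ ε ft ∧ (∀ i, p (ft i) = f i) ∧ ft 0 = s q) ∧
    (∀ ft : Fin (n + 1) → Qt,
      IsQCol opT opTInv κ ε ft → (∀ i, p (ft i) = f i) → ft 0 = s q →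
      f (Fin.last n) = q →
      ft (Fin.last n) = act (weight lam κ ε f) (s q)) := by
  obtain ⟨hQ1b, hQ2b, hQ3b⟩ := hext.quandle_base
  obtain ⟨hQ1t, hQ2t, hQ3t⟩ := hext.quandle_total
  -- left-injectivity of opT
  have hinj : ∀ w z z', opT z w = opT z' w → z = z' := by
    intro w z z' h
    have h1 := (hQ2t z w).1
    rw [h, (hQ2t z' w).1] at h1
    exact h1.symm
  have act_neg : ∀ l z, act (-l) (act l z) = z := by
    intro l z
    rw [← hext.act_add, neg_add_cancel, hext.act_zero]
  have opTInv_act_left : ∀ (l : Λ) z w, opTInv (act l z) w = act l (opTInv z w) := by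
    intro l z w
    apply hinj w
    rw [(hQ2t (act l z) w).2, hext.act_op_left, (hQ2t z w).2]
  have opTInv_act_right : ∀ z (l : Λ) w, opTInv z (act l w) = opTInv z w := by
    intro z l w
    apply hinj w
    rw [(hQ2t z w).2, ← hext.act_op_right l, (hQ2t z (act l w)).2]
  have p_act : ∀ (l : Λ) z, p (act l z) = p z :=
    fun l z => ((hext.fibres_orbits z (act l z)).mpr ⟨l, rfl⟩).symm
  have s_inv : ∀ a b, opTInv (s a) (s b)
      = act (-(lam (opQInv a b) b)) (s (opQInv a b)) := by
    intro a b
    have h1 : opT (s (opQInv a b)) (s b) = act (lam (opQInv a b) b) (s a) := by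
      rw [hlam, (hQ2b a b).2]
    have h2 : s (opQInv a b) = act (lam (opQInv a b) b) (opTInv (s a) (s b)) := by
      rw [← opTInv_act_left, ← h1, (hQ2t _ _).1]
    rw [h2, act_neg]
  -- the explicit lift
  set ft : Fin (n + 1) → Qt := fun i => act (pw lam κ ε f i) (s (f i)) with hft
  have hftcol : IsQCol opT opTInv κ ε ft := by
    intro i
    by_cases h : ε i = 1
    · simp only [hft, if_pos h]
      rw [hext.act_op_right, hext.act_op_left, hlam, ← hext.act_add,
        pw_succ lam κ ε f i, if_pos h]
      have := hf i
      rw [if_pos h] at this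
      rw [this]
    · simp only [hft, if_neg h]
      have hfi : f i.succ = opQInv (f i.castSucc) (f (κ i)) := by
        have := hf i; rwa [if_neg h] at this
      rw [opTInv_act_right, opTInv_act_left, s_inv, ← hext.act_add,
        pw_succ lam κ ε f i, if_neg h, hfi]
  have hftp : ∀ i, p (ft i) = f i := by
    intro i
    rw [hft]
    simp only
    rw [p_act, hs]
  have hft0 : ft 0 = s q := by
    rw [hft]
    simp only
    rw [pw_zero, hext.act_zero, hf0]
  -- uniqueness
  have huniq : ∀ g : Fin (n + 1) → Qt, IsQCol opT opTInv κ ε g →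
      (∀ i, p (g i) = f i) → g 0 = s q → g = ft := by
    intro g hg hpg hg0
    funext i
    induction i using Fin.induction with
    | zero => rw [hg0, hft0]
    | succ i ih =>
      obtain ⟨lk, hlk⟩ : ∃ l, act l (ft (κ i)) = g (κ i) :=
        (hext.fibres_orbits _ _).mp (by rw [hftp, hpg])
      rw [hg i, hftcol i]
      by_cases h : ε i = 1
      · rw [if_pos h, if_pos h, ih, ← hlk, hext.act_op_right]
      · rw [if_neg h, if_neg h, ih, ← hlk, opTInv_act_right]
  constructor
  · exact ⟨ft, ⟨hftcol, hftp, hft0⟩, fun g ⟨hg, hpg, hg0⟩ => huniq g hg hpg hg0⟩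
  · intro g hg hpg hg0 hlast
    rw [huniq g hg hpg hg0, hft]
    simp only
    rw [pw_last, hlast]
end

section
/- Let G be a group and x ∈ G such that G is generated by the conjugacy class Q = x^G, let G' be the commutator subgroup, and suppose Λ = C(x) ∩ G' is abelian. Let Q̃(G,x) be the covering quandle with projection p(a,g) = a and Λ-action λ•(a,g) = (a, λg), let s : Q → Q̃(G,x) be a section of p with s(x) = (x,1), and let λ : Q × Q → Λ be the associated 2-cocycle, defined by s(a) ◃ s(b) = λ(a,b) • s(a ◃ b). Then for every Wirtinger code (n, κ, ε) and every G-colouring f of the code with f(0) = f(n) = x: every colour f(i) lies in Q, and the longitude l(f) = ∏_{i=1}^{n} f(i−1)^{−ε(i)} f(κ(i))^{ε(i)} equals, as an element of G, the weight W_λ(f) = ∏_{i=1}^{n} w_i, where w_i = λ(f(i−1), f(κ(i))) if ε(i) = +1 and w_i = λ(f(i), f(κ(i)))⁻¹ if ε(i) = −1. -/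
lemma tele_stmt13 {G : Type*} [Group G] : ∀ (n : ℕ) (t : Fin n → G) (g : Fin (n+1) → G),
    (List.ofFn fun i : Fin n => g i.castSucc * t i * (g i.succ)⁻¹).prod
      = g 0 * (List.ofFn t).prod * (g (Fin.last n))⁻¹ := by
  intro n
  induction n with
  | zero => intro t g; simp
  | succ n ih =>
    intro t g
    rw [List.ofFn_succ, List.ofFn_succ (f := t), List.prod_cons, List.prod_cons]
    have := ih (fun i => t i.succ) (fun i => g i.succ)
    simp only [Fin.succ_castSucc] at this ⊢
    rw [this]
    simp [Fin.succ_last]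
    group

/-- Let `G` be generated by the conjugacy class `C = x^G`, with
`Λ = C(x) ∩ G'` abelian.  Let `s` be a section of the projection of the covering quandle
`Q̃(G,x) = {(a,g) ∈ G × G' : a = g⁻¹xg}` with `s(x) = (x,1)`, and let
`λ : C × C → Λ` be the associated 2-cocycle, i.e.
`s(a) ◃ s(b) = λ(a,b) • s(b⁻¹ab)` where `(a,g) ◃ (b,h) = (b⁻¹ab, g·a⁻¹·b)` and
`λ • (a,g) = (a, λ·g)`.  Then for every Wirtinger code and every `G`-colouring `f` with
`f(0) = f(n) = x`: every colour lies in `C`, and the longitude `l(f)` equals, in `G`, the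
weight `∏ᵢ wᵢ` with `wᵢ = λ(f(i−1), f(κ(i)))` at positive crossings and
`wᵢ = λ(f(i), f(κ(i)))⁻¹` at negative ones. -/
theorem stmt_13 {G : Type*} [Group G] (x : G)
    (C : Set G) (hC : C = {a : G | ∃ g : G, a = g⁻¹ * x * g})
    (hgen : Subgroup.closure C = ⊤)
    (Qt : Set (G × G))
    (hQt : Qt = {z : G × G | z.2 ∈ commutator G ∧ z.1 = z.2⁻¹ * x * z.2})
    (Λ : Set G) (hΛ : Λ = {l : G | l ∈ commutator G ∧ l * x = x * l})
    (habelian : ∀ l ∈ Λ, ∀ l' ∈ Λ, l * l' = l' * l)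
    (s : G → G × G)
    (hs : ∀ a ∈ C, s a ∈ Qt ∧ (s a).1 = a)
    (hsx : s x = (x, 1))
    (lam : G → G → G)
    (hlam : ∀ a ∈ C, ∀ b ∈ C, lam a b ∈ Λ ∧
      ((s b).1⁻¹ * (s a).1 * (s b).1, (s a).2 * (s a).1⁻¹ * (s b).1) =
        ((s (b⁻¹ * a * b)).1, lam a b * (s (b⁻¹ * a * b)).2))
    (n : ℕ) (κ : Fin n → Fin (n + 1)) (ε : Fin n → ℤ) (hε : ∀ i, ε i = 1 ∨ ε i = -1)
    (f : Fin (n + 1) → G) (hf : IsGCol κ ε f)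
    (hf0 : f 0 = x) (hfn : f (Fin.last n) = x) :
    (∀ i, f i ∈ C) ∧
    longitude κ ε f =
      (List.ofFn fun i : Fin n =>
        if ε i = 1 then lam (f i.castSucc) (f (κ i))
        else (lam (f i.succ) (f (κ i)))⁻¹).prod := by
  have hmem : ∀ i : Fin (n+1), f i ∈ C := by
    intro i
    rw [hC]
    induction i using Fin.induction with
    | zero => exact ⟨1, by simp [hf0]⟩
    | succ i ih =>
      obtain ⟨g, hg⟩ := ih
      exact ⟨g * f (κ i) ^ (ε i), by rw [hf i, hg]; group⟩
  refine ⟨hmem, ?_⟩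
  -- key pointwise identity
  have hkey : ∀ i : Fin n,
      (if ε i = 1 then lam (f i.castSucc) (f (κ i))
        else (lam (f i.succ) (f (κ i)))⁻¹)
      = (s (f i.castSucc)).2 * (f i.castSucc ^ (-ε i) * f (κ i) ^ (ε i)) *
          ((s (f i.succ)).2)⁻¹ := by
    intro i
    rcases hε i with h1 | h1
    · rw [if_pos h1]
      have hrel : f i.succ = (f (κ i))⁻¹ * f i.castSucc * f (κ i) := by
        have := hf i; rw [h1] at this; simpa using this
      have h2 := (hlam (f i.castSucc) (hmem _) (f (κ i)) (hmem _)).2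
      rw [Prod.mk.injEq] at h2
      have h3 := h2.2
      rw [(hs _ (hmem _)).2, (hs _ (hmem _)).2, ← hrel] at h3
      rw [h1]
      have : lam (f i.castSucc) (f (κ i)) =
          ((s (f i.castSucc)).2 * (f i.castSucc)⁻¹ * f (κ i)) * ((s (f i.succ)).2)⁻¹ := by
        rw [h3]; group
      rw [this]; group
    · rw [if_neg (by rw [h1]; decide)]
      have hrel : f i.succ = f (κ i) * f i.castSucc * (f (κ i))⁻¹ := by
        have := hf i; rw [h1] at this; simpa using this
      have hrel' : (f (κ i))⁻¹ * f i.succ * f (κ i) = f i.castSucc := by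
        rw [hrel]; group
      have h2 := (hlam (f i.succ) (hmem _) (f (κ i)) (hmem _)).2
      rw [Prod.mk.injEq] at h2
      have h3 := h2.2
      rw [(hs _ (hmem _)).2, (hs _ (hmem _)).2, hrel'] at h3
      have hl : lam (f i.succ) (f (κ i)) =
          ((s (f i.succ)).2 * (f i.succ)⁻¹ * f (κ i)) * ((s (f i.castSucc)).2)⁻¹ := by
        rw [h3]; group
      rw [hl, h1, hrel]; group
  have hσ0 : (s (f 0)).2 = 1 := by rw [hf0, hsx]
  have hσn : (s (f (Fin.last n))).2 = 1 := by rw [hfn, hsx]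
  calc longitude κ ε f
      = (List.ofFn fun i : Fin n => (s (f i.castSucc)).2 *
          (f i.castSucc ^ (-ε i) * f (κ i) ^ (ε i)) * ((s (f i.succ)).2)⁻¹).prod := by
        rw [tele_stmt13 n _ (fun j => (s (f j)).2), hσ0, hσn, longitude]
        group
    _ = _ :=
        congrArg (fun F : Fin n → G => (List.ofFn F).prod)
          (funext fun i => (hkey i).symm)
end

section
/- Let G be a finite group, x ∈ G, and p a prime such that the order of the inner automorphism g ↦ x⁻¹gx in the automorphism group of G is a power of p. Then for every Wirtinger code (n, κ, ε) and every g ∈ G, the number of G-colourings f of the code with f(0) = f(n) = x and longitude l(f) = g is congruent modulo p to 1 if g = 1, and congruent to 0 modulo p if g ≠ 1. -/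
/-- Partial conjugation formula: `f m = (P m)⁻¹ * f 0 * P m` where `P m` is the product of
the first `m` longitude factors. -/
lemma col_partial {G : Type*} [Group G] {n : ℕ} {κ : Fin n → Fin (n + 1)} {ε : Fin n → ℤ}
    {f : Fin (n + 1) → G} (hf : IsGCol κ ε f) :
    ∀ m : ℕ, (hm : m ≤ n) →
      f ⟨m, Nat.lt_succ_of_le hm⟩ =
        (((List.ofFn fun i : Fin n => f i.castSucc ^ (-ε i) * f (κ i) ^ (ε i)).take m).prod)⁻¹
          * f 0 *
        ((List.ofFn fun i : Fin n => f i.castSucc ^ (-ε i) * f (κ i) ^ (ε i)).take m).prod := by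
  intro m
  induction m with
  | zero => intro hm; simp
  | succ m ih =>
    intro hm
    have hmn : m < n := hm
    set L : List G := List.ofFn fun i : Fin n => f i.castSucc ^ (-ε i) * f (κ i) ^ (ε i) with hL
    have hlen : m < L.length := by simp [hL, hmn]
    have hget : L[m] = f (⟨m, hmn⟩ : Fin n).castSucc ^ (-ε ⟨m, hmn⟩)
        * f (κ ⟨m, hmn⟩) ^ (ε ⟨m, hmn⟩) := by
      simp [hL, List.getElem_ofFn]
    rw [List.prod_take_succ L m hlen, hget]
    have ihm := ih (Nat.le_of_lt hmn)
    set P : G := (L.take m).prod with hP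
    -- identity for f 0 in terms of f ⟨m⟩
    set i : Fin n := ⟨m, hmn⟩ with hi
    have hstep := hf i
    have hsucc : (i.succ : Fin (n + 1)) = ⟨m + 1, Nat.lt_succ_of_le hm⟩ := rfl
    have hcast : (i.castSucc : Fin (n + 1)) = ⟨m, Nat.lt_succ_of_le (Nat.le_of_lt hmn)⟩ := rfl
    rw [hsucc] at hstep
    rw [hstep]
    have hx0 : f 0 = P * f i.castSucc * P⁻¹ := by
      rw [hcast, ihm]; group
    rw [hx0]
    group

lemma col_last {G : Type*} [Group G] {n : ℕ} {κ : Fin n → Fin (n + 1)} {ε : Fin n → ℤ}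
    {f : Fin (n + 1) → G} (hf : IsGCol κ ε f) :
    f (Fin.last n) = (longitude κ ε f)⁻¹ * f 0 * longitude κ ε f := by
  have h := col_partial hf n le_rfl
  have htake : ((List.ofFn fun i : Fin n =>
      f i.castSucc ^ (-ε i) * f (κ i) ^ (ε i)).take n) =
      List.ofFn fun i : Fin n => f i.castSucc ^ (-ε i) * f (κ i) ^ (ε i) := by
    apply List.take_of_length_le; simp
  rw [htake] at h
  exact h

/-- If all values of a colouring commute with `x = f 0`, then the colouring is constant. -/
lemma col_const {G : Type*} [Group G] {n : ℕ} {κ : Fin n → Fin (n + 1)} {ε : Fin n → ℤ}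
    {f : Fin (n + 1) → G} {x : G} (hf : IsGCol κ ε f) (h0 : f 0 = x)
    (hc : ∀ i, Commute x (f i)) : ∀ i, f i = x := by
  have key : ∀ m : ℕ, (hm : m ≤ n) → f ⟨m, Nat.lt_succ_of_le hm⟩ = x := by
    intro m
    induction m with
    | zero => intro hm; exact h0
    | succ m ih =>
      intro hm
      have hmn : m < n := hm
      set i : Fin n := ⟨m, hmn⟩ with hi
      have hstep := hf i
      have hsucc : (i.succ : Fin (n + 1)) = ⟨m + 1, Nat.lt_succ_of_le hm⟩ := rfl
      have hcast : (i.castSucc : Fin (n + 1)) = ⟨m, Nat.lt_succ_of_le (Nat.le_of_lt hmn)⟩ := rfl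
      rw [hsucc, hcast, ih (Nat.le_of_lt hmn)] at hstep
      rw [hstep]
      have hcomm : Commute x (f (κ i) ^ (ε i)) := (hc (κ i)).zpow_right (ε i)
      rw [mul_assoc, hcomm.eq, ← mul_assoc]
      have : f (κ i) ^ (-ε i) * f (κ i) ^ (ε i) = 1 := by group
      rw [this, one_mul]
  intro i
  have := key i.1 (Nat.le_of_lt_succ i.2)
  simpa using this

lemma longitude_const {G : Type*} [Group G] {n : ℕ} (κ : Fin n → Fin (n + 1)) (ε : Fin n → ℤ)
    (x : G) : longitude κ ε (fun _ => x) = 1 := by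
  unfold longitude
  apply List.prod_eq_one
  intro a ha
  rw [List.mem_ofFn] at ha
  obtain ⟨i, rfl⟩ := ha
  group

lemma longitude_map {G : Type*} [Group G] {n : ℕ} (κ : Fin n → Fin (n + 1)) (ε : Fin n → ℤ)
    (f : Fin (n + 1) → G) (ψ : MulAut G) :
    longitude κ ε (fun i => ψ (f i)) = ψ (longitude κ ε f) := by
  unfold longitude
  symm
  rw [map_list_prod ψ, List.map_ofFn]
  simp [Function.comp_def, map_mul, map_zpow]

/-- Let `G` be a finite group, `x ∈ G`, and `p` a prime such that the inner
automorphism `g ↦ x⁻¹gx` has `p`-power order in `Aut(G)`.  Then for every Wirtinger code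
and every `g ∈ G`, the number of `G`-colourings `f` with `f(0) = f(n) = x` and longitude
`g` is congruent mod `p` to `1` if `g = 1` and to `0` otherwise. -/
theorem stmt_15 {G : Type*} [Group G] [Fintype G] [DecidableEq G]
    (x : G) (p : ℕ) (hp : p.Prime) (k : ℕ)
    (hord : orderOf (MulAut.conj x⁻¹) = p ^ k)
    (n : ℕ) (κ : Fin n → Fin (n + 1)) (ε : Fin n → ℤ) (hε : ∀ i, ε i = 1 ∨ ε i = -1)
    (g : G) :
    Nat.card {f : Fin (n + 1) → G //
        IsGCol κ ε f ∧ f 0 = x ∧ f (Fin.last n) = x ∧ longitude κ ε f = g} ≡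
      (if g = 1 then 1 else 0) [MOD p] := by
  classical
  set φ : MulAut G := MulAut.conj x⁻¹ with hφ
  have hφ_apply : ∀ a : G, φ a = x⁻¹ * a * x := by
    intro a; simp [hφ, MulAut.conj_apply]
  have hφx : φ x = x := by rw [hφ_apply]; group
  set S := {f : Fin (n + 1) → G //
      IsGCol κ ε f ∧ f 0 = x ∧ f (Fin.last n) = x ∧ longitude κ ε f = g} with hS
  by_cases hcomm : Commute x g
  case neg =>
    -- the set is empty and g ≠ 1
    have hempty : IsEmpty S := by
      constructor
      rintro ⟨f, hf, h0, hl, hg⟩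
      apply hcomm
      have := col_last hf
      rw [h0, hl, hg] at this
      -- x = g⁻¹ * x * g
      have : g * x = x * g := by
        conv_lhs => rw [this]
        group
      exact this.symm
    have hg1 : g ≠ 1 := by
      intro h; exact hcomm (h ▸ Commute.one_right x)
    rw [if_neg hg1, Nat.card_of_isEmpty]
  case pos =>
    have hφg : φ g = g := by
      rw [hφ_apply, mul_assoc, ← hcomm.eq]; group
    haveI : Fact p.Prime := ⟨hp⟩
    set H := Subgroup.zpowers φ with hH
    have hHp : IsPGroup p H := IsPGroup.of_card (by rw [Nat.card_zpowers, hord])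
    have hmemx : ∀ ψ : MulAut G, ψ ∈ H → ψ x = x := by
      intro ψ hψ
      have hst : φ ∈ MulAction.stabilizer (MulAut G) x :=
        MulAction.mem_stabilizer_iff.mpr hφx
      exact (Subgroup.zpowers_le.mpr hst) hψ
    have hmemg : ∀ ψ : MulAut G, ψ ∈ H → ψ g = g := by
      intro ψ hψ
      have hst : φ ∈ MulAction.stabilizer (MulAut G) g :=
        MulAction.mem_stabilizer_iff.mpr hφg
      exact (Subgroup.zpowers_le.mpr hst) hψ
    -- the action of H on S
    have hsmul_mem : ∀ (ψ : H) (f : S),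
        IsGCol κ ε (fun i => (ψ : MulAut G) (f.1 i)) ∧
        (fun i => (ψ : MulAut G) (f.1 i)) 0 = x ∧
        (fun i => (ψ : MulAut G) (f.1 i)) (Fin.last n) = x ∧
        longitude κ ε (fun i => (ψ : MulAut G) (f.1 i)) = g := by
      rintro ⟨ψ, hψ⟩ ⟨f, hf, h0, hl, hg⟩
      refine ⟨?_, ?_, ?_, ?_⟩
      · intro i
        simp only
        rw [hf i]
        simp [map_mul, map_zpow]
      · simp only; rw [h0]; exact hmemx ψ hψ
      · simp only; rw [hl]; exact hmemx ψ hψ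
      · rw [longitude_map κ ε f ψ, hg]; exact hmemg ψ hψ
    letI : SMul H S := ⟨fun ψ f => ⟨fun i => (ψ : MulAut G) (f.1 i), hsmul_mem ψ f⟩⟩
    have smul_def : ∀ (ψ : H) (f : S), (ψ • f).1 = fun i => (ψ : MulAut G) (f.1 i) :=
      fun _ _ => rfl
    letI : MulAction H S :=
      { one_smul := by
          intro f
          apply Subtype.ext
          rw [smul_def]
          simp
        mul_smul := by
          intro ψ χ f
          apply Subtype.ext
          rw [smul_def, smul_def, smul_def]
          funext i
          simp [MulAut.mul_apply] }
    haveI : Finite S := Subtype.finite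
    have key := hHp.card_modEq_card_fixedPoints S
    -- characterize fixed points
    have hfixmem : ∀ f : S, f ∈ MulAction.fixedPoints H S ↔ f.1 = fun _ => x := by
      intro f
      constructor
      · intro hfp
        have h1 := hfp ⟨φ, Subgroup.mem_zpowers φ⟩
        have h2 : ∀ i, φ (f.1 i) = f.1 i := by
          intro i
          have := congrArg Subtype.val h1
          rw [smul_def] at this
          exact congrFun this i
        have hc : ∀ i, Commute x (f.1 i) := by
          intro i
          have := h2 i
          rw [hφ_apply] at this
          have hxfi : x * (x⁻¹ * f.1 i * x) = x * f.1 i := by rw [this]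
          calc x * f.1 i = x * (x⁻¹ * f.1 i * x) := hxfi.symm
            _ = f.1 i * x := by group
        funext i
        exact col_const f.2.1 f.2.2.1 hc i
      · intro hconst
        intro ψ
        apply Subtype.ext
        rw [smul_def, hconst]
        funext i
        exact hmemx ψ.1 ψ.2
    by_cases hg1 : g = 1
    · subst hg1
      rw [if_pos rfl]
      -- the constant colouring
      have hcmem : IsGCol κ ε (fun _ => x) ∧ (fun _ : Fin (n+1) => x) 0 = x ∧
          (fun _ : Fin (n+1) => x) (Fin.last n) = x ∧
          longitude κ ε (fun _ : Fin (n+1) => x) = 1 := by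
        refine ⟨?_, rfl, rfl, longitude_const κ ε x⟩
        intro i; simp only; group
      set c : S := ⟨fun _ => x, hcmem⟩ with hc
      have hfix1 : Nat.card (MulAction.fixedPoints H S) = 1 := by
        rw [Nat.card_eq_one_iff_unique]
        constructor
        · constructor
          rintro ⟨f, hf⟩ ⟨f', hf'⟩
          apply Subtype.ext
          apply Subtype.ext
          rw [(hfixmem f).mp hf, (hfixmem f').mp hf']
        · exact ⟨⟨c, (hfixmem c).mpr rfl⟩⟩
      rw [hfix1] at key
      exact key
    · rw [if_neg hg1]
      have hfix0 : Nat.card (MulAction.fixedPoints H S) = 0 := by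
        have : IsEmpty (MulAction.fixedPoints H S) := by
          constructor
          rintro ⟨f, hf⟩
          apply hg1
          have hconst := (hfixmem f).mp hf
          have := f.2.2.2.2
          rw [hconst, longitude_const] at this
          exact this.symm
        exact Nat.card_of_isEmpty
      rw [hfix0] at key
      exact key
end

section
/- Let F be a finite field and let G be the affine group of F, i.e. the set F × Fˣ with multiplication (a,b)·(c,d) = (a + bc, bd). For every ring automorphism φ of F let φ̂ denote the group automorphism of G given by φ̂(a,b) = (φ(a), φ(b)). Then for every group automorphism α of G there exist g ∈ G and a ring automorphism φ of F such that α(h) = g⁻¹·φ̂(h)·g for all h ∈ G; moreover φ is uniquely determined by α (equivalently, if g⁻¹·φ̂(h)·g = g'⁻¹·φ̂'(h)·g' for all h ∈ G, then φ = φ'). -/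
/-! Translations have order `p = char F` while `Fˣ` has no element of order `p` (Frobenius is
injective), so `α` maps translations to translations, `α (a, 1) = (σ a, 1)` with `σ` additive.
Conjugating `(x, 1)` by `w` gives `(w.b * x, 1)`, so `σ (w.b * x) = (α w).b * σ x`; hence
`φ := σ(1)⁻¹ σ` is a ring automorphism and `α` acts on linear parts by `φ`. The translation parts
of `α (0, b)` then form a `φ`-twisted 1-cocycle on `Fˣ`, which is a coboundary by averaging since
`|Fˣ| = -1` in `F`; conjugation by a suitable `g` produces exactly this coboundary. -/

/-- The affine group of a field `F`: the set `F × Fˣ` with multiplication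
`(a,b)·(c,d) = (a + bc, bd)`. -/
@[ext]
structure Aff (F : Type*) [Field F] where
  a : F
  b : Fˣ

namespace Aff

variable {F : Type*} [Field F]

instance : Mul (Aff F) := ⟨fun z w => ⟨z.a + (z.b : F) * w.a, z.b * w.b⟩⟩
instance : One (Aff F) := ⟨⟨0, 1⟩⟩
instance : Inv (Aff F) := ⟨fun z => ⟨-(((z.b⁻¹ : Fˣ) : F) * z.a), z.b⁻¹⟩⟩

lemma mul_def (z w : Aff F) : z * w = ⟨z.a + (z.b : F) * w.a, z.b * w.b⟩ := rfl
lemma one_def : (1 : Aff F) = ⟨0, 1⟩ := rfl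
lemma inv_def (z : Aff F) : z⁻¹ = ⟨-(((z.b⁻¹ : Fˣ) : F) * z.a), z.b⁻¹⟩ := rfl

instance : Group (Aff F) where
  mul_assoc z w u := by
    simp only [mul_def, Aff.mk.injEq, Units.val_mul]
    exact ⟨by ring, mul_assoc _ _ _⟩
  one_mul z := by
    obtain ⟨za, zb⟩ := z
    simp [mul_def, one_def]
  mul_one z := by
    obtain ⟨za, zb⟩ := z
    simp [mul_def, one_def]
  inv_mul_cancel z := by
    simp only [mul_def, inv_def, one_def, Aff.mk.injEq]
    exact ⟨by simp, inv_mul_cancel z.b⟩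

end Aff

/-- The automorphism of the affine group induced by a ring automorphism `φ` of `F`,
given by `(a,b) ↦ (φ(a), φ(b))`. -/
def affMap {F : Type*} [Field F] (φ : F ≃+* F) (h : Aff F) : Aff F :=
  ⟨φ h.a, Units.map (φ : F →+* F).toMonoidHom h.b⟩

theorem exists_eq_sub_one_mul_of_cocycle {G R : Type*} [Group G] [Finite G] [Field R]
    (hG : (Nat.card G : R) ≠ 0) (ρ c : G → R) (hc : ∀ g h, c (g * h) = c g + ρ g * c h) :
    ∃ m : R, ∀ g, c g = (ρ g - 1) * m := by
  cases nonempty_fintype G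
  rw [Nat.card_eq_fintype_card] at hG
  set n : R := (Fintype.card G : R)
  refine ⟨-n⁻¹ * ∑ h, c h, fun g => ?_⟩
  have hsum : ∑ h, c h = n * c g + ρ g * ∑ h, c h :=
    calc ∑ h, c h = ∑ h, c (g * h) :=
          (Fintype.sum_bijective _ (Group.mulLeft_bijective g) _ _ fun _ => rfl).symm
      _ = _ := by simp only [hc, Finset.sum_add_distrib, Finset.sum_const, ← Finset.mul_sum,
            Finset.card_univ, nsmul_eq_mul, n]
  calc c g = n⁻¹ * (n * c g) := by field_simp
    _ = _ := by rw [show n * c g = (1 - ρ g) * ∑ h, c h by linear_combination -hsum]; ring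

def RingHom.ofScaledMul {R : Type*} [Field R] (f : R →+ R) (hf : f 1 ≠ 0)
    (hmul : ∀ x y, f (x * y) * f 1 = f x * f y) : R →+* R where
  toFun x := (f 1)⁻¹ * f x
  map_one' := inv_mul_cancel₀ hf
  map_mul' x y := by
    field_simp
    linear_combination hmul x y
  map_zero' := by simp
  map_add' x y := by simp [mul_add]

theorem FiniteField.cast_card_units_ne_zero (F : Type*) [Field F] [Finite F] :
    (Nat.card Fˣ : F) ≠ 0 := by
  cases nonempty_fintype F
  rw [Nat.card_units, Nat.cast_sub Nat.card_pos, Nat.card_eq_fintype_card,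
    FiniteField.cast_card_eq_zero]
  simp

theorem Units.eq_one_of_pow_char_eq_one {F : Type*} [Field F] (p : ℕ) [ExpChar F p] {u : Fˣ}
    (hu : u ^ p = 1) : u = 1 :=
  Units.ext <| frobenius_inj F p <| by simpa [frobenius_def] using congrArg Units.val hu

namespace Aff

variable {F : Type*} [Field F]

@[simp] lemma mul_a (z w : Aff F) : (z * w).a = z.a + z.b * w.a := rfl

@[simp] lemma mul_b (z w : Aff F) : (z * w).b = z.b * w.b := rfl

@[simp] lemma mk_mul_mk (a c : F) (b d : Fˣ) :
    (⟨a, b⟩ : Aff F) * ⟨c, d⟩ = ⟨a + b * c, b * d⟩ := rfl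

lemma mk_eq_mk_one_mul (a : F) (b : Fˣ) : (⟨a, b⟩ : Aff F) = ⟨a, 1⟩ * ⟨0, b⟩ := by
  simp

def linearPart : Aff F →* Fˣ where
  toFun z := z.b
  map_one' := rfl
  map_mul' _ _ := rfl

lemma mk_one_pow (a : F) (n : ℕ) : (⟨a, 1⟩ : Aff F) ^ n = ⟨n * a, 1⟩ := by
  induction n with
  | zero => simp [one_def]
  | succ n ih => simp [pow_succ, ih, add_mul]

lemma mul_mk_one_mul_inv (w : Aff F) (x : F) : w * ⟨x, 1⟩ * w⁻¹ = ⟨w.b * x, 1⟩ := by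
  obtain ⟨a, b⟩ := w
  simp [inv_def]

lemma inv_mul_mul (g z : Aff F) :
    g⁻¹ * z * g = ⟨(g.b : F)⁻¹ * (z.a + (z.b - 1) * g.a), z.b⟩ := by
  obtain ⟨a, b⟩ := g
  obtain ⟨c, d⟩ := z
  simp only [inv_def, Units.val_inv_eq_inv_val, mk_mul_mk, Units.val_mul, inv_mul_cancel_comm,
    mk.injEq, and_true]
  ring

lemma inv_mul_affMap_mul (g : Aff F) (φ : F ≃+* F) (z : Aff F) :
    g⁻¹ * affMap φ z * g =
      ⟨(g.b : F)⁻¹ * (φ z.a + (φ z.b - 1) * g.a), Units.map (φ : F →+* F).toMonoidHom z.b⟩ := by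
  simp [inv_mul_mul, affMap]

lemma mk_one_pow_char (p : ℕ) [CharP F p] (a : F) : (⟨a, 1⟩ : Aff F) ^ p = 1 := by
  simp [mk_one_pow, one_def]

lemma map_mk_one_b (p : ℕ) [Fact p.Prime] [CharP F p] (α : Aff F →* Aff F) (a : F) :
    (α ⟨a, 1⟩).b = 1 := by
  have h : α ⟨a, 1⟩ ^ p = 1 := by rw [← map_pow, mk_one_pow_char, map_one]
  have hb := congrArg linearPart h
  rw [map_pow, map_one] at hb
  exact Units.eq_one_of_pow_char_eq_one p hb

lemma eq_of_inv_mul_affMap_mul_eq {g g' : Aff F} {φ φ' : F ≃+* F}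
    (h : ∀ z, g⁻¹ * affMap φ z * g = g'⁻¹ * affMap φ' z * g') : φ = φ' := by
  have ha (x : F) : (g.b : F)⁻¹ * φ x = (g'.b : F)⁻¹ * φ' x := by
    simpa [inv_mul_affMap_mul] using congrArg Aff.a (h ⟨x, 1⟩)
  have hb : (g.b : F)⁻¹ = (g'.b : F)⁻¹ := by simpa using ha 1
  ext x
  exact mul_left_cancel₀ (by simp) ((ha x).trans (by rw [hb]))

section Finite

variable [Finite F] (α : Aff F →* Aff F)

def translationMap : F →+ F where
  toFun a := (α ⟨a, 1⟩).a
  map_zero' := congrArg Aff.a (map_one α)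
  map_add' a c := by
    have : Fact (ringChar F).Prime := ⟨CharP.char_is_prime F _⟩
    simpa [map_mk_one_b (ringChar F)] using congrArg Aff.a (map_mul α ⟨a, 1⟩ ⟨c, 1⟩)

lemma map_mk_one (a : F) : α ⟨a, 1⟩ = ⟨translationMap α a, 1⟩ :=
  have : Fact (ringChar F).Prime := ⟨CharP.char_is_prime F _⟩
  Aff.ext rfl (map_mk_one_b (ringChar F) α a)

lemma translationMap_mul (w : Aff F) (x : F) :
    translationMap α (w.b * x) = (α w).b * translationMap α x := by
  have h := congrArg α (mul_mk_one_mul_inv w x)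
  rw [map_mul, map_mul, map_inv, map_mk_one, map_mk_one, mul_mk_one_mul_inv] at h
  exact congrArg Aff.a h.symm

lemma translationMap_mul_mul_one (x y : F) :
    translationMap α (x * y) * translationMap α 1 = translationMap α x * translationMap α y := by
  rcases eq_or_ne x 0 with rfl | hx
  · simp
  · have hxy := translationMap_mul α ⟨0, Units.mk0 x hx⟩ y
    have hx1 := translationMap_mul α ⟨0, Units.mk0 x hx⟩ 1
    simp only [Units.val_mk0, mul_one] at hxy hx1
    rw [hxy, hx1]
    ring

variable {α}

lemma translationMap_one_ne_zero (hα : Function.Injective α) : translationMap α 1 ≠ 0 := by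
  intro h
  have : α ⟨1, 1⟩ = α 1 := by rw [map_mk_one, h, map_one, one_def]
  simpa [one_def] using congrArg Aff.a (hα this)

noncomputable def fieldAut (hα : Function.Injective α) : F ≃+* F :=
  RingEquiv.ofBijective
    (RingHom.ofScaledMul (translationMap α) (translationMap_one_ne_zero hα)
      (translationMap_mul_mul_one α))
    (Finite.injective_iff_bijective.mp (RingHom.injective _))

lemma fieldAut_apply (hα : Function.Injective α) (x : F) :
    fieldAut hα x = (translationMap α 1)⁻¹ * translationMap α x := rfl

lemma map_b (hα : Function.Injective α) (w : Aff F) : ((α w).b : F) = fieldAut hα w.b := by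
  have h := translationMap_mul α w 1
  rw [mul_one] at h
  rw [fieldAut_apply, h]
  field_simp [translationMap_one_ne_zero hα]

lemma exists_map_mk_zero_a_eq (hα : Function.Injective α) :
    ∃ m : F, ∀ b : Fˣ, (α ⟨0, b⟩).a = (fieldAut hα b - 1) * m := by
  refine exists_eq_sub_one_mul_of_cocycle (FiniteField.cast_card_units_ne_zero F) _ _
    fun b b' => ?_
  have h := congrArg Aff.a (map_mul α ⟨0, b⟩ ⟨0, b'⟩)
  simpa [map_b hα] using h

theorem exists_eq_inv_mul_affMap_mul (hα : Function.Injective α) :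
    ∃ g : Aff F, ∀ z, α z = g⁻¹ * affMap (fieldAut hα) z * g := by
  obtain ⟨m, hm⟩ := exists_map_mk_zero_a_eq hα
  have ht := translationMap_one_ne_zero hα
  refine ⟨⟨(translationMap α 1)⁻¹ * m, (Units.mk0 _ ht)⁻¹⟩, fun ⟨a, b⟩ => ?_⟩
  rw [mk_eq_mk_one_mul, map_mul, map_mk_one, inv_mul_affMap_mul]
  ext
  · simp only [mul_a, Units.val_one, hm, fieldAut_apply, one_mul, Units.val_inv_eq_inv_val,
      Units.val_mk0, inv_inv, mk_mul_mk, mul_zero, add_zero]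
    field_simp
  · simp [map_b hα]

end Finite

end Aff

/-- Every group automorphism `α` of the affine group of a finite field `F`
has the form `α(h) = g⁻¹·φ̂(h)·g` for some `g` in the affine group and some ring
automorphism `φ` of `F`; moreover `φ` is uniquely determined by `α`. -/
theorem stmt_16 {F : Type*} [Field F] [Fintype F] (α : Aff F ≃* Aff F) :
    (∃ (g : Aff F) (φ : F ≃+* F), ∀ h : Aff F, α h = g⁻¹ * affMap φ h * g) ∧
    (∀ (g g' : Aff F) (φ φ' : F ≃+* F),
      (∀ h : Aff F, g⁻¹ * affMap φ h * g = g'⁻¹ * affMap φ' h * g') → φ = φ') := by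
  obtain ⟨g, hg⟩ := Aff.exists_eq_inv_mul_affMap_mul (α := α.toMonoidHom) α.injective
  exact ⟨⟨g, _, hg⟩, fun _ _ _ _ => Aff.eq_of_inv_mul_affMap_mul_eq⟩
end
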